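/- arXiv:1911.04132 — 4 statements merged into one kernel-verified Lean document; each statement's English description precedes it below -/
import Mathlib

section
/- Let x be an n×n complex Hermitian matrix and let λ₁ ≥ λ₂ ≥ ⋯ ≥ λₙ be its eigenvalues listed in non-increasing order with multiplicity. Suppose λ_s = λ_{s+1} = ⋯ = λ_t = c for some indices 1 ≤ s ≤ t ≤ n. Then for every j with s ≤ j ≤ t and every m with n − (t − j) ≤ m ≤ n, the j-th largest eigenvalue (with multiplicity) of the m×m leading principal submatrix x^{(m)} equals c. Consequently, the corresponding components of the Gelfand–Cetlin map are constant on the set of Hermitian matrices with eigenvalues λ₁, …, λₙ. -/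
open Polynomial

section Helpers
open Matrix Finset
noncomputable section

/-- Characteristic polynomial of a unitary conjugate of a diagonal matrix. -/
lemma charpoly_unitary_conj {k : ℕ} (U : Matrix (Fin k) (Fin k) ℂ)
    (hU : U ∈ Matrix.unitaryGroup (Fin k) ℂ) (d : Fin k → ℂ) :
    (U * Matrix.diagonal d * star U).charpoly = ∏ i : Fin k, (X - C (d i)) := by
  have h1 : U * star U = 1 := Matrix.mem_unitaryGroup_iff.mp hU
  have h1' : star U * U = 1 := Matrix.mem_unitaryGroup_iff'.mp hU
  set U' := (C : ℂ →+* ℂ[X]).mapMatrix U with hU'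
  set V' := (C : ℂ →+* ℂ[X]).mapMatrix (star U) with hV'
  have h2 : U' * V' = 1 := by rw [hU', hV', ← _root_.map_mul, h1, _root_.map_one]
  have h2' : V' * U' = 1 := by rw [hU', hV', ← _root_.map_mul, h1', _root_.map_one]
  have hcomm : U' * Matrix.scalar (Fin k) X = Matrix.scalar (Fin k) X * U' :=
    (Matrix.scalar_commute X (fun r' => Commute.all _ _) U').symm
  have key : charmatrix (U * Matrix.diagonal d * star U)
      = U' * charmatrix (Matrix.diagonal d) * V' := by
    rw [charmatrix, charmatrix, _root_.map_mul, _root_.map_mul, Matrix.mul_sub, Matrix.sub_mul]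
    congr 1
    rw [hcomm, mul_assoc, h2, mul_one]
  have hdet : (U * Matrix.diagonal d * star U).charpoly = (Matrix.diagonal d).charpoly := by
    rw [Matrix.charpoly, key, Matrix.charpoly, det_mul, det_mul, mul_comm, ← mul_assoc,
      ← det_mul, h2', det_one, one_mul]
  rw [hdet, Matrix.charpoly_of_upperTriangular _ (Matrix.blockTriangular_diagonal d)]
  simp [Matrix.diagonal_apply_eq]

lemma charpoly_eq_prod_eigenvalues {k : ℕ} {A : Matrix (Fin k) (Fin k) ℂ} (hA : A.IsHermitian) :
    A.charpoly = ∏ i : Fin k, (X - C (hA.eigenvalues i : ℂ)) := by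
  conv_lhs => rw [hA.spectral_theorem]
  exact charpoly_unitary_conj _ (hA.eigenvectorUnitary).2 _

variable {k : ℕ} {A : Matrix (Fin k) (Fin k) ℂ}

lemma toEuclideanLin_eigenvectorBasis (hA : A.IsHermitian) (i : Fin k) :
    Matrix.toEuclideanLin A (hA.eigenvectorBasis i)
      = (hA.eigenvalues i : ℂ) • hA.eigenvectorBasis i := by
  apply (WithLp.equiv 2 (Fin k → ℂ)).injective
  ext j
  have := congrFun (hA.mulVec_eigenvectorBasis i) j
  simpa [Matrix.toEuclideanLin_apply] using this

lemma repr_toEuclideanLin (hA : A.IsHermitian) (v : EuclideanSpace ℂ (Fin k)) (i : Fin k) :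
    hA.eigenvectorBasis.repr (Matrix.toEuclideanLin A v) i
      = (hA.eigenvalues i : ℂ) * hA.eigenvectorBasis.repr v i := by
  set b := hA.eigenvectorBasis with hb
  have h1 : Matrix.toEuclideanLin A v = ∑ j, ((hA.eigenvalues j : ℂ) * b.repr v j) • b j := by
    conv_lhs => rw [← b.sum_repr v, map_sum]
    refine Finset.sum_congr rfl fun j _ => ?_
    rw [LinearMap.map_smul, toEuclideanLin_eigenvectorBasis hA, smul_smul, mul_comm]
  rw [h1, map_sum]
  simp only [_root_.map_smul, OrthonormalBasis.repr_self]
  classical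
  rw [WithLp.ofLp_sum]
  simp [EuclideanSpace.single_apply, Pi.single_apply, mul_comm]

lemma quad_sum_eq (hA : A.IsHermitian) (v : EuclideanSpace ℂ (Fin k)) :
    RCLike.re (@inner ℂ _ _ v (Matrix.toEuclideanLin A v))
      = ∑ i, hA.eigenvalues i * ‖hA.eigenvectorBasis.repr v i‖ ^ 2 := by
  set b := hA.eigenvectorBasis
  have h1 : @inner ℂ _ _ v (Matrix.toEuclideanLin A v)
      = @inner ℂ _ _ (b.repr v) (b.repr (Matrix.toEuclideanLin A v)) :=
    (b.repr.inner_map_map v _).symm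
  rw [h1, PiLp.inner_apply]
  simp only [repr_toEuclideanLin hA, RCLike.inner_apply]
  rw [map_sum]
  refine Finset.sum_congr rfl fun i _ => ?_
  rw [show (b.repr (Matrix.toEuclideanLin A v)) i * (starRingEnd ℂ) (b.repr v i)
      = (hA.eigenvalues i : ℂ) * ((starRingEnd ℂ) (b.repr v i) * b.repr v i) by
        rw [repr_toEuclideanLin hA]; ring]
  rw [Complex.conj_mul', ← Complex.ofReal_pow, ← Complex.ofReal_mul]
  exact Complex.ofReal_re _

lemma norm_sq_sum (hA : A.IsHermitian) (v : EuclideanSpace ℂ (Fin k)) :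
    ‖v‖ ^ 2 = ∑ i, ‖hA.eigenvectorBasis.repr v i‖ ^ 2 := by
  rw [← hA.eigenvectorBasis.repr.norm_map v, EuclideanSpace.norm_eq,
    Real.sq_sqrt (Finset.sum_nonneg fun i _ => sq_nonneg _)]

lemma exists_repr_ne_zero (hA : A.IsHermitian) {v : EuclideanSpace ℂ (Fin k)} (hv : v ≠ 0) :
    ∃ i, hA.eigenvectorBasis.repr v i ≠ 0 := by
  by_contra h
  push_neg at h
  apply hv
  apply hA.eigenvectorBasis.repr.injective
  rw [map_zero]
  ext i
  exact h i

lemma quad_gt (hA : A.IsHermitian) {c : ℝ} {v : EuclideanSpace ℂ (Fin k)} (hv : v ≠ 0)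
    (h : ∀ i, hA.eigenvectorBasis.repr v i ≠ 0 → c < hA.eigenvalues i) :
    c * ‖v‖ ^ 2 < RCLike.re (@inner ℂ _ _ v (Matrix.toEuclideanLin A v)) := by
  rw [quad_sum_eq hA, norm_sq_sum hA, Finset.mul_sum]
  obtain ⟨i₀, hi₀⟩ := exists_repr_ne_zero hA hv
  refine Finset.sum_lt_sum (fun i _ => ?_) ⟨i₀, Finset.mem_univ _, ?_⟩
  · by_cases hi : hA.eigenvectorBasis.repr v i = 0
    · simp [hi]
    · exact mul_le_mul_of_nonneg_right (h i hi).le (sq_nonneg _)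
  · exact mul_lt_mul_of_pos_right (h i₀ hi₀) (pow_pos (norm_pos_iff.mpr hi₀) 2)

lemma quad_lt (hA : A.IsHermitian) {c : ℝ} {v : EuclideanSpace ℂ (Fin k)} (hv : v ≠ 0)
    (h : ∀ i, hA.eigenvectorBasis.repr v i ≠ 0 → hA.eigenvalues i < c) :
    RCLike.re (@inner ℂ _ _ v (Matrix.toEuclideanLin A v)) < c * ‖v‖ ^ 2 := by
  rw [quad_sum_eq hA, norm_sq_sum hA, Finset.mul_sum]
  obtain ⟨i₀, hi₀⟩ := exists_repr_ne_zero hA hv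
  refine Finset.sum_lt_sum (fun i _ => ?_) ⟨i₀, Finset.mem_univ _, ?_⟩
  · by_cases hi : hA.eigenvectorBasis.repr v i = 0
    · simp [hi]
    · exact mul_le_mul_of_nonneg_right (h i hi).le (sq_nonneg _)
  · exact mul_lt_mul_of_pos_right (h i₀ hi₀) (pow_pos (norm_pos_iff.mpr hi₀) 2)

lemma quad_le (hA : A.IsHermitian) {c : ℝ} {v : EuclideanSpace ℂ (Fin k)}
    (h : ∀ i, hA.eigenvectorBasis.repr v i ≠ 0 → hA.eigenvalues i ≤ c) :
    RCLike.re (@inner ℂ _ _ v (Matrix.toEuclideanLin A v)) ≤ c * ‖v‖ ^ 2 := by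
  rw [quad_sum_eq hA, norm_sq_sum hA, Finset.mul_sum]
  refine Finset.sum_le_sum (fun i _ => ?_)
  by_cases hi : hA.eigenvectorBasis.repr v i = 0
  · simp [hi]
  · exact mul_le_mul_of_nonneg_right (h i hi) (sq_nonneg _)

lemma quad_ge (hA : A.IsHermitian) {c : ℝ} {v : EuclideanSpace ℂ (Fin k)}
    (h : ∀ i, hA.eigenvectorBasis.repr v i ≠ 0 → c ≤ hA.eigenvalues i) :
    c * ‖v‖ ^ 2 ≤ RCLike.re (@inner ℂ _ _ v (Matrix.toEuclideanLin A v)) := by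
  rw [quad_sum_eq hA, norm_sq_sum hA, Finset.mul_sum]
  refine Finset.sum_le_sum (fun i _ => ?_)
  by_cases hi : hA.eigenvectorBasis.repr v i = 0
  · simp [hi]
  · exact mul_le_mul_of_nonneg_right (h i hi) (sq_nonneg _)

/-- Zero-padding of a vector, as a linear map. -/
def padLM {m n : ℕ} (hmn : m ≤ n) : EuclideanSpace ℂ (Fin m) →ₗ[ℂ] EuclideanSpace ℂ (Fin n) where
  toFun v := WithLp.toLp 2 (fun i => if h : (i : ℕ) < m then v ⟨i, h⟩ else 0)
  map_add' v w := by ext i; by_cases h : (i : ℕ) < m <;> simp [h]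
  map_smul' c v := by ext i; by_cases h : (i : ℕ) < m <;> simp [h]

lemma padLM_apply {m n : ℕ} (hmn : m ≤ n) (v : EuclideanSpace ℂ (Fin m)) (i : Fin n) :
    padLM hmn v i = if h : (i : ℕ) < m then v ⟨i, h⟩ else 0 := rfl

lemma padLM_castLE {m n : ℕ} (hmn : m ≤ n) (v : EuclideanSpace ℂ (Fin m)) (j : Fin m) :
    padLM hmn v (Fin.castLE hmn j) = v j := by
  simp [padLM_apply, j.isLt]

lemma padLM_injective {m n : ℕ} (hmn : m ≤ n) : Function.Injective (padLM hmn) := by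
  intro v w h
  ext j
  have := congrFun (congrArg WithLp.ofLp h) (Fin.castLE hmn j)
  rwa [padLM_castLE, padLM_castLE] at this

lemma sum_pad {m n : ℕ} (hmn : m ≤ n) (f : Fin n → ℂ) (hf : ∀ i : Fin n, m ≤ (i : ℕ) → f i = 0) :
    ∑ i : Fin n, f i = ∑ j : Fin m, f (Fin.castLE hmn j) := by
  have himg : ∑ j : Fin m, f (Fin.castLE hmn j)
      = ∑ i ∈ Finset.image (Fin.castLE hmn) Finset.univ, f i := by
    rw [Finset.sum_image (by intro a _ b _ h; exact Fin.castLE_injective hmn h)]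
  rw [himg]
  symm
  apply Finset.sum_subset (Finset.subset_univ _)
  intro i _ hi
  apply hf
  by_contra h
  push_neg at h
  exact hi (Finset.mem_image.mpr ⟨⟨i, h⟩, Finset.mem_univ _, rfl⟩)

lemma inner_pad {m n : ℕ} (hmn : m ≤ n) (v w : EuclideanSpace ℂ (Fin m)) :
    @inner ℂ _ _ (padLM hmn v) (padLM hmn w) = @inner ℂ _ _ v w := by
  rw [PiLp.inner_apply, PiLp.inner_apply]
  rw [sum_pad hmn _ (fun i hi => by
    simp only [RCLike.inner_apply, padLM_apply]
    rw [dif_neg (by omega)]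
    simp)]
  refine Finset.sum_congr rfl fun j _ => by rw [padLM_castLE, padLM_castLE]

lemma quad_pad {m n : ℕ} (hmn : m ≤ n) (A : Matrix (Fin n) (Fin n) ℂ)
    (v : EuclideanSpace ℂ (Fin m)) :
    @inner ℂ _ _ (padLM hmn v) (Matrix.toEuclideanLin A (padLM hmn v))
      = @inner ℂ _ _ v (Matrix.toEuclideanLin
          (A.submatrix (Fin.castLE hmn) (Fin.castLE hmn)) v) := by
  rw [PiLp.inner_apply, PiLp.inner_apply]
  have hTv : ∀ i : Fin n, (Matrix.toEuclideanLin A (padLM hmn v)) i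
      = ∑ j : Fin n, A i j * padLM hmn v j := by
    intro i
    rw [Matrix.toEuclideanLin_apply]
    rfl
  have hTv' : ∀ j : Fin m, (Matrix.toEuclideanLin
      (A.submatrix (Fin.castLE hmn) (Fin.castLE hmn)) v) j
      = ∑ l : Fin m, A (Fin.castLE hmn j) (Fin.castLE hmn l) * v l := by
    intro j
    rw [Matrix.toEuclideanLin_apply]
    rfl
  rw [sum_pad hmn _ (fun i hi => by
    simp only [RCLike.inner_apply, padLM_apply]
    rw [dif_neg (by omega)]
    simp)]
  refine Finset.sum_congr rfl fun j _ => ?_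
  simp only [RCLike.inner_apply, padLM_castLE, hTv, hTv']
  congr 1
  rw [sum_pad hmn _ (fun i hi => by rw [padLM_apply, dif_neg (by omega), mul_zero])]
  refine Finset.sum_congr rfl fun l _ => by rw [padLM_castLE]

lemma span_finrank (hA : A.IsHermitian) (S : Finset (Fin k)) :
    Module.finrank ℂ (Submodule.span ℂ (⇑hA.eigenvectorBasis '' ↑S)) = S.card := by
  set b := hA.eigenvectorBasis
  have himg : ⇑b '' ↑S = Set.range (fun i : S => b i) := by
    exact (Set.image_eq_range _ _)
  rw [himg]
  have hli : LinearIndependent ℂ (fun i : S => b i) := by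
    have h0 : LinearIndependent ℂ (⇑b) := by
      have := b.toBasis.linearIndependent
      rwa [OrthonormalBasis.coe_toBasis] at this
    exact h0.comp Subtype.val Subtype.val_injective
  rw [finrank_span_eq_card hli, Fintype.card_coe]

lemma mem_span_repr (hA : A.IsHermitian) (S : Finset (Fin k)) {v : EuclideanSpace ℂ (Fin k)}
    (hv : v ∈ Submodule.span ℂ (⇑hA.eigenvectorBasis '' ↑S)) :
    ∀ i, hA.eigenvectorBasis.repr v i ≠ 0 → i ∈ S := by
  set b := hA.eigenvectorBasis
  have hv' : v ∈ Submodule.span ℂ (⇑b.toBasis '' ↑S) := by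
    rwa [OrthonormalBasis.coe_toBasis]
  rw [Module.Basis.mem_span_image] at hv'
  intro i hi
  have : i ∈ (b.toBasis.repr v).support := by
    rw [Finsupp.mem_support_iff, OrthonormalBasis.coe_toBasis_repr_apply]
    exact hi
  exact hv' this

lemma inertia_count_gt {m n : ℕ} (hmn : m ≤ n) {A : Matrix (Fin n) (Fin n) ℂ}
    (hA : A.IsHermitian)
    (hB : (A.submatrix (Fin.castLE hmn) (Fin.castLE hmn)).IsHermitian) (c : ℝ) :
    (Finset.univ.filter fun i => c < hB.eigenvalues i).card
      ≤ (Finset.univ.filter fun i => c < hA.eigenvalues i).card := by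
  by_contra hcon
  push_neg at hcon
  set SB := Finset.univ.filter fun i => c < hB.eigenvalues i with hSB
  set SA := Finset.univ.filter fun i => c < hA.eigenvalues i with hSA
  set SAc := Finset.univ.filter fun i => ¬ c < hA.eigenvalues i with hSAc
  set W := Submodule.span ℂ (⇑hB.eigenvectorBasis '' ↑SB) with hW
  set U := W.map (padLM hmn) with hU
  set V := Submodule.span ℂ (⇑hA.eigenvectorBasis '' ↑SAc) with hV
  have dimU : Module.finrank ℂ U = SB.card := by
    rw [← span_finrank hB SB]
    exact (LinearEquiv.finrank_eq
      (Submodule.equivMapOfInjective _ (padLM_injective hmn) W)).symm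
  have dimV : Module.finrank ℂ V = SAc.card := span_finrank hA SAc
  have hcards : SA.card + SAc.card = n := by
    rw [hSA, hSAc, Finset.card_filter_add_card_filter_not, Finset.card_univ,
      Fintype.card_fin]
  have htop : Module.finrank ℂ (U ⊔ V : Submodule ℂ (EuclideanSpace ℂ (Fin n))) ≤ n := by
    refine le_trans (Submodule.finrank_le _) ?_
    simp [finrank_euclideanSpace, Fintype.card_fin]
  have hsum := Submodule.finrank_sup_add_finrank_inf_eq U V
  have hinf : 0 < Module.finrank ℂ (U ⊓ V : Submodule ℂ (EuclideanSpace ℂ (Fin n))) := by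
    omega
  obtain ⟨x, hx⟩ := Module.finrank_pos_iff_exists_ne_zero.mp hinf
  obtain ⟨hxU, hxV⟩ := x.2
  have hx0 : (x : EuclideanSpace ℂ (Fin n)) ≠ 0 := fun h => hx (Subtype.ext h)
  obtain ⟨v, hvW, hvx⟩ := Submodule.mem_map.mp hxU
  have hv0 : v ≠ 0 := by
    intro h
    apply hx0
    rw [← hvx, h, map_zero]
  have ineq1 : c * ‖v‖ ^ 2 < RCLike.re (@inner ℂ _ _ v (Matrix.toEuclideanLin
      (A.submatrix (Fin.castLE hmn) (Fin.castLE hmn)) v)) := by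
    refine quad_gt hB hv0 (fun i hi => ?_)
    have := mem_span_repr hB SB hvW i hi
    rw [hSB, Finset.mem_filter] at this
    exact this.2
  have ineq2 : RCLike.re (@inner ℂ _ _ (x : EuclideanSpace ℂ (Fin n))
      (Matrix.toEuclideanLin A (x : EuclideanSpace ℂ (Fin n))))
        ≤ c * ‖(x : EuclideanSpace ℂ (Fin n))‖ ^ 2 := by
    refine quad_le hA (fun i hi => ?_)
    have := mem_span_repr hA SAc hxV i hi
    rw [hSAc, Finset.mem_filter] at this
    exact not_lt.mp this.2
  have htrans : RCLike.re (@inner ℂ _ _ v (Matrix.toEuclideanLin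
      (A.submatrix (Fin.castLE hmn) (Fin.castLE hmn)) v))
      = RCLike.re (@inner ℂ _ _ (x : EuclideanSpace ℂ (Fin n))
        (Matrix.toEuclideanLin A (x : EuclideanSpace ℂ (Fin n)))) := by
    rw [← hvx, quad_pad hmn]
  have hnorm : ‖(x : EuclideanSpace ℂ (Fin n))‖ ^ 2 = ‖v‖ ^ 2 := by
    have h3 : @inner ℂ _ _ (x : EuclideanSpace ℂ (Fin n)) (x : EuclideanSpace ℂ (Fin n))
        = @inner ℂ _ _ v v := by rw [← hvx, inner_pad]
    rw [← @inner_self_eq_norm_sq ℂ, ← @inner_self_eq_norm_sq ℂ, h3]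
  rw [htrans] at ineq1
  rw [hnorm] at ineq2
  linarith

lemma inertia_count_lt {m n : ℕ} (hmn : m ≤ n) {A : Matrix (Fin n) (Fin n) ℂ}
    (hA : A.IsHermitian)
    (hB : (A.submatrix (Fin.castLE hmn) (Fin.castLE hmn)).IsHermitian) (c : ℝ) :
    (Finset.univ.filter fun i => hB.eigenvalues i < c).card
      ≤ (Finset.univ.filter fun i => hA.eigenvalues i < c).card := by
  by_contra hcon
  push_neg at hcon
  set SB := Finset.univ.filter fun i => hB.eigenvalues i < c with hSB
  set SA := Finset.univ.filter fun i => hA.eigenvalues i < c with hSA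
  set SAc := Finset.univ.filter fun i => ¬ hA.eigenvalues i < c with hSAc
  set W := Submodule.span ℂ (⇑hB.eigenvectorBasis '' ↑SB) with hW
  set U := W.map (padLM hmn) with hU
  set V := Submodule.span ℂ (⇑hA.eigenvectorBasis '' ↑SAc) with hV
  have dimU : Module.finrank ℂ U = SB.card := by
    rw [← span_finrank hB SB]
    exact (LinearEquiv.finrank_eq
      (Submodule.equivMapOfInjective _ (padLM_injective hmn) W)).symm
  have dimV : Module.finrank ℂ V = SAc.card := span_finrank hA SAc
  have hcards : SA.card + SAc.card = n := by
    rw [hSA, hSAc, Finset.card_filter_add_card_filter_not, Finset.card_univ,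
      Fintype.card_fin]
  have htop : Module.finrank ℂ (U ⊔ V : Submodule ℂ (EuclideanSpace ℂ (Fin n))) ≤ n := by
    refine le_trans (Submodule.finrank_le _) ?_
    simp [finrank_euclideanSpace, Fintype.card_fin]
  have hsum := Submodule.finrank_sup_add_finrank_inf_eq U V
  have hinf : 0 < Module.finrank ℂ (U ⊓ V : Submodule ℂ (EuclideanSpace ℂ (Fin n))) := by
    omega
  obtain ⟨x, hx⟩ := Module.finrank_pos_iff_exists_ne_zero.mp hinf
  obtain ⟨hxU, hxV⟩ := x.2
  have hx0 : (x : EuclideanSpace ℂ (Fin n)) ≠ 0 := fun h => hx (Subtype.ext h)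
  obtain ⟨v, hvW, hvx⟩ := Submodule.mem_map.mp hxU
  have hv0 : v ≠ 0 := by
    intro h
    apply hx0
    rw [← hvx, h, map_zero]
  have ineq1 : RCLike.re (@inner ℂ _ _ v (Matrix.toEuclideanLin
      (A.submatrix (Fin.castLE hmn) (Fin.castLE hmn)) v)) < c * ‖v‖ ^ 2 := by
    refine quad_lt hB hv0 (fun i hi => ?_)
    have := mem_span_repr hB SB hvW i hi
    rw [hSB, Finset.mem_filter] at this
    exact this.2
  have ineq2 : c * ‖(x : EuclideanSpace ℂ (Fin n))‖ ^ 2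
      ≤ RCLike.re (@inner ℂ _ _ (x : EuclideanSpace ℂ (Fin n))
        (Matrix.toEuclideanLin A (x : EuclideanSpace ℂ (Fin n)))) := by
    refine quad_ge hA (fun i hi => ?_)
    have := mem_span_repr hA SAc hxV i hi
    rw [hSAc, Finset.mem_filter] at this
    exact not_lt.mp this.2
  have htrans : RCLike.re (@inner ℂ _ _ v (Matrix.toEuclideanLin
      (A.submatrix (Fin.castLE hmn) (Fin.castLE hmn)) v))
      = RCLike.re (@inner ℂ _ _ (x : EuclideanSpace ℂ (Fin n))
        (Matrix.toEuclideanLin A (x : EuclideanSpace ℂ (Fin n)))) := by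
    rw [← hvx, quad_pad hmn]
  have hnorm : ‖(x : EuclideanSpace ℂ (Fin n))‖ ^ 2 = ‖v‖ ^ 2 := by
    have h3 : @inner ℂ _ _ (x : EuclideanSpace ℂ (Fin n)) (x : EuclideanSpace ℂ (Fin n))
        = @inner ℂ _ _ v v := by rw [← hvx, inner_pad]
    rw [← @inner_self_eq_norm_sq ℂ, ← @inner_self_eq_norm_sq ℂ, h3]
  rw [htrans] at ineq1
  rw [hnorm] at ineq2
  linarith

lemma multiset_eq_of_charpoly {k : ℕ} (f : ℕ → ℝ) {A : Matrix (Fin k) (Fin k) ℂ}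
    (hA : A.IsHermitian)
    (h : A.charpoly = ∏ i ∈ Finset.Icc 1 k, (X - C (f i : ℂ))) :
    Multiset.map f (Finset.Icc 1 k).val = Multiset.map hA.eigenvalues Finset.univ.val := by
  have h2 : (∏ i ∈ Finset.Icc 1 k, (X - C (f i : ℂ)))
      = (∏ i : Fin k, (X - C (hA.eigenvalues i : ℂ))) := by
    rw [← h, charpoly_eq_prod_eigenvalues hA]
  have hroots : ∀ (ι : Type) (s : Finset ι) (g : ι → ℝ),
      (∏ i ∈ s, (X - C (g i : ℂ))).roots
        = Multiset.map (fun i => ((g i : ℝ) : ℂ)) s.val := by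
    intro ι s g
    have : (∏ i ∈ s, (X - C (g i : ℂ)))
        = (Multiset.map (fun a : ℂ => X - C a)
            (Multiset.map (fun i => ((g i : ℝ) : ℂ)) s.val)).prod := by
      rw [Multiset.map_map]
      rfl
    rw [this, Polynomial.roots_multiset_prod_X_sub_C]
  have e1 := hroots ℕ (Finset.Icc 1 k) f
  have e2 := hroots (Fin k) Finset.univ hA.eigenvalues
  rw [h2, e2] at e1
  have e1' : Multiset.map (Complex.ofReal) (Multiset.map f (Finset.Icc 1 k).val)
      = Multiset.map (Complex.ofReal) (Multiset.map hA.eigenvalues Finset.univ.val) := by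
    rw [Multiset.map_map, Multiset.map_map]
    exact e1.symm
  exact Multiset.map_injective Complex.ofReal_injective e1'

lemma count_eq_of_multiset_eq {k : ℕ} {ι : Type*} [Fintype ι]
    (f : ℕ → ℝ) (g : ι → ℝ)
    (h : Multiset.map f (Finset.Icc 1 k).val = Multiset.map g Finset.univ.val)
    (p : ℝ → Prop) [DecidablePred p] :
    ((Finset.Icc 1 k).filter (fun i => p (f i))).card
      = (Finset.univ.filter (fun i => p (g i))).card := by
  have e1 : ((Finset.Icc 1 k).filter (fun i => p (f i))).card
      = Multiset.countP p (Multiset.map f (Finset.Icc 1 k).val) := by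
    rw [Multiset.countP_map]; rfl
  have e2 : (Finset.univ.filter (fun i => p (g i))).card
      = Multiset.countP p (Multiset.map g Finset.univ.val) := by
    rw [Multiset.countP_map]; rfl
  rw [e1, e2, h]

lemma step_antitone (f : ℕ → ℝ) (k : ℕ) (h : ∀ i, 1 ≤ i → i < k → f (i + 1) ≤ f i)
    {a b : ℕ} (ha : 1 ≤ a) (hab : a ≤ b) (hbk : b ≤ k) : f b ≤ f a := by
  induction b, hab using Nat.le_induction with
  | base => exact le_refl _
  | succ b hab ih =>
      exact le_trans (h b (le_trans ha hab) (by omega)) (ih (by omega))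

end
end Helpers

/-- Let `x` be an `n × n` Hermitian matrix with eigenvalues
`λ₁ ≥ ⋯ ≥ λₙ` (1-based, encoded by the characteristic polynomial of `x` being
`∏_{i=1}^{n} (X - λᵢ)` with `lam` non-increasing on `1..n`).  Suppose
`λ_s = ⋯ = λ_t = c` for some `1 ≤ s ≤ t ≤ n`.  Then for every `j` with `s ≤ j ≤ t`
and every `m` with `n - (t - j) ≤ m ≤ n`, the `j`-th largest eigenvalue (with
multiplicity) of the `m × m` leading principal submatrix `x⁽ᵐ⁾` equals `c`:
any non-increasing tuple `μ 1 ≥ ⋯ ≥ μ m` whose associated product of linear factors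
is the characteristic polynomial of `x⁽ᵐ⁾` satisfies `μ j = c`. -/
theorem statement1 (n : ℕ) (x : Matrix (Fin n) (Fin n) ℂ) (hx : x.IsHermitian)
    (lam : ℕ → ℝ) (hlam : ∀ i, 1 ≤ i → i < n → lam (i + 1) ≤ lam i)
    (hchar : x.charpoly = ∏ i ∈ Finset.Icc 1 n, (X - C (lam i : ℂ)))
    (c : ℝ) (s t : ℕ) (hs : 1 ≤ s) (hst : s ≤ t) (htn : t ≤ n)
    (hc : ∀ i, s ≤ i → i ≤ t → lam i = c) :
    ∀ j, s ≤ j → j ≤ t → ∀ m, ∀ hm1 : n - (t - j) ≤ m, ∀ hm2 : m ≤ n,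
      ∀ μ : ℕ → ℝ, (∀ i, 1 ≤ i → i < m → μ (i + 1) ≤ μ i) →
        (x.submatrix (Fin.castLE (show m ≤ n by omega))
            (Fin.castLE (show m ≤ n by omega))).charpoly
          = ∏ i ∈ Finset.Icc 1 m, (X - C (μ i : ℂ)) →
        μ j = c := by
  intro j hjs hjt m hm1 hm2 μ hμ hcharB
  classical
  have hmn : m ≤ n := hm2
  have hB : (x.submatrix (Fin.castLE hmn) (Fin.castLE hmn)).IsHermitian :=
    hx.submatrix _
  have hjm : j ≤ m := by omega
  have hj1 : 1 ≤ j := le_trans hs hjs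
  -- multiset equalities
  have M1 := multiset_eq_of_charpoly lam hx hchar
  have M2 : Multiset.map μ (Finset.Icc 1 m).val
      = Multiset.map hB.eigenvalues Finset.univ.val :=
    multiset_eq_of_charpoly μ hB hcharB
  -- counts for the big matrix
  have hA_gt : ((Finset.Icc 1 n).filter (fun i => c < lam i)).card ≤ s - 1 := by
    have hsub : (Finset.Icc 1 n).filter (fun i => c < lam i) ⊆ Finset.Icc 1 (s - 1) := ?_
    · exact le_trans (Finset.card_le_card hsub) (by rw [Nat.card_Icc]; omega)
    intro i hi
    rw [Finset.mem_filter, Finset.mem_Icc] at hi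
    rw [Finset.mem_Icc]
    refine ⟨hi.1.1, ?_⟩
    by_contra hcon
    push_neg at hcon
    have hsi : s ≤ i := by omega
    have hle : lam i ≤ c := by
      by_cases hit : i ≤ t
      · exact (hc i hsi hit).le
      · calc lam i ≤ lam t := step_antitone lam n hlam (le_trans hs hst) (by omega) hi.1.2
          _ = c := hc t hst (le_refl t)
    exact absurd hi.2 (not_lt.mpr hle)
  have hA_lt : ((Finset.Icc 1 n).filter (fun i => lam i < c)).card ≤ n - t := by
    have hsub : (Finset.Icc 1 n).filter (fun i => lam i < c) ⊆ Finset.Icc (t + 1) n := ?_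
    · exact le_trans (Finset.card_le_card hsub) (by rw [Nat.card_Icc]; omega)
    intro i hi
    rw [Finset.mem_filter, Finset.mem_Icc] at hi
    rw [Finset.mem_Icc]
    refine ⟨?_, hi.1.2⟩
    by_contra hcon
    push_neg at hcon
    have hit : i ≤ t := by omega
    have hge : c ≤ lam i := by
      by_cases hsi : s ≤ i
      · exact (hc i hsi hit).ge
      · calc c = lam s := (hc s (le_refl s) hst).symm
          _ ≤ lam i := step_antitone lam n hlam hi.1.1 (by omega) (le_trans hst htn)
    exact absurd hi.2 (not_lt.mpr hge)
  -- counts for the submatrix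
  have hB_gt : ((Finset.Icc 1 m).filter (fun i => c < μ i)).card ≤ s - 1 := by
    calc ((Finset.Icc 1 m).filter (fun i => c < μ i)).card
        = (Finset.univ.filter (fun i => c < hB.eigenvalues i)).card :=
          count_eq_of_multiset_eq μ hB.eigenvalues M2 (fun r => c < r)
      _ ≤ (Finset.univ.filter (fun i => c < hx.eigenvalues i)).card :=
          inertia_count_gt hmn hx hB c
      _ = ((Finset.Icc 1 n).filter (fun i => c < lam i)).card :=
          (count_eq_of_multiset_eq lam hx.eigenvalues M1 (fun r => c < r)).symm
      _ ≤ s - 1 := hA_gt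
  have hB_lt : ((Finset.Icc 1 m).filter (fun i => μ i < c)).card ≤ n - t := by
    calc ((Finset.Icc 1 m).filter (fun i => μ i < c)).card
        = (Finset.univ.filter (fun i => hB.eigenvalues i < c)).card :=
          count_eq_of_multiset_eq μ hB.eigenvalues M2 (fun r => r < c)
      _ ≤ (Finset.univ.filter (fun i => hx.eigenvalues i < c)).card :=
          inertia_count_lt hmn hx hB c
      _ = ((Finset.Icc 1 n).filter (fun i => lam i < c)).card :=
          (count_eq_of_multiset_eq lam hx.eigenvalues M1 (fun r => r < c)).symm
      _ ≤ n - t := hA_lt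
  -- conclude
  by_contra hne
  rcases lt_trichotomy (μ j) c with hlt | heq | hgt
  · have hsub : Finset.Icc j m ⊆ (Finset.Icc 1 m).filter (fun i => μ i < c) := by
      intro i hi
      rw [Finset.mem_Icc] at hi
      rw [Finset.mem_filter, Finset.mem_Icc]
      exact ⟨⟨le_trans hj1 hi.1, hi.2⟩,
        lt_of_le_of_lt (step_antitone μ m hμ hj1 hi.1 hi.2) hlt⟩
    have := Finset.card_le_card hsub
    rw [Nat.card_Icc] at this
    omega
  · exact hne heq
  · have hsub : Finset.Icc 1 j ⊆ (Finset.Icc 1 m).filter (fun i => c < μ i) := by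
      intro i hi
      rw [Finset.mem_Icc] at hi
      rw [Finset.mem_filter, Finset.mem_Icc]
      exact ⟨⟨hi.1, le_trans hi.2 hjm⟩,
        lt_of_lt_of_le hgt (step_antitone μ m hμ hi.1 hi.2 hjm)⟩
    have := Finset.card_le_card hsub
    rw [Nat.card_Icc] at this
    omega
end

section
/- Let k ≥ 1 and let a₁ ≥ b₁ ≥ a₂ ≥ b₂ ≥ ⋯ ≥ a_k ≥ b_k ≥ a_{k+1} be real numbers. Then there exist complex numbers z₁, …, z_k and a real number z_{k+1} such that the (k+1)×(k+1) Hermitian matrix whose upper-left k×k block is diag(b₁, …, b_k), whose (i, k+1) entry is the complex conjugate of z_i and whose (k+1, i) entry is z_i for 1 ≤ i ≤ k, and whose (k+1, k+1) entry is z_{k+1}, has eigenvalues a₁, …, a_{k+1} counted with multiplicity (i.e., its characteristic polynomial equals ∏_{i=1}^{k+1}(X − a_i)). -/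
open Polynomial Finset Matrix

/-- The `(k+1) × (k+1)` Hermitian "arrow" matrix whose upper-left `k × k` block is
`diag(b 1, …, b k)`, whose `(i, k+1)` entry is `conj (z i)` and `(k+1, i)` entry is `z i`
for `1 ≤ i ≤ k` (1-based indexing of the sequences), and whose `(k+1, k+1)` entry is `w`. -/
def Zarrow (k : ℕ) (b : ℕ → ℝ) (w : ℝ) (z : ℕ → ℂ) :
    Matrix (Fin (k + 1)) (Fin (k + 1)) ℂ :=
  Matrix.of fun i j =>
    if (i : ℕ) < k then
      if (j : ℕ) < k then (if i = j then (b ((i : ℕ) + 1) : ℂ) else 0)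
      else (starRingEnd ℂ) (z ((i : ℕ) + 1))
    else
      if (j : ℕ) < k then z ((j : ℕ) + 1)
      else (w : ℂ)


lemma prod_neg_sign {s : Finset ℕ} (f : ℕ → ℝ) :
    ∏ j ∈ s, f j = (-1) ^ s.card * ∏ j ∈ s, (-(f j)) := by
  have h : ∀ j ∈ s, -(f j) = (-1) * f j := by intros; ring
  rw [Finset.prod_congr rfl h, Finset.prod_mul_distrib, Finset.prod_const,
    ← mul_assoc, ← mul_pow]
  norm_num

lemma keyDistinct (k : ℕ) (hk : 1 ≤ k) (a b : ℕ → ℝ)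
    (hab : ∀ i, 1 ≤ i → i ≤ k → b i ≤ a i ∧ a (i+1) ≤ b i)
    (hinj : ∀ i j, 1 ≤ i → i ≤ k → 1 ≤ j → j ≤ k → i ≠ j → b i ≠ b j) :
    ∃ (c : ℕ → ℝ), (∀ i, 0 ≤ c i) ∧
      ∏ i ∈ Icc 1 (k+1), (X - C (a i)) =
        (X - C ((∑ j ∈ Icc 1 (k+1), a j) - ∑ j ∈ Icc 1 k, b j)) *
            ∏ i ∈ Icc 1 k, (X - C (b i))
        - ∑ i ∈ Icc 1 k, C (c i) * ∏ j ∈ (Icc 1 k).erase i, (X - C (b j)) := by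
  have ha_anti : ∀ i j, 1 ≤ i → i ≤ j → j ≤ k + 1 → a j ≤ a i := by
    intro i j h1 h2 h3
    revert h3
    induction j, h2 using Nat.le_induction with
    | base => intro _; exact le_refl _
    | succ j hij ih =>
      intro h3
      have h4 := ih (by omega)
      have h5 := (hab j (by omega) (by omega)).2
      have h6 := (hab j (by omega) (by omega)).1
      linarith
  have hb_anti : ∀ i j, 1 ≤ i → i ≤ j → j ≤ k → b j ≤ b i := by
    intro i j h1 h2 h3
    revert h3
    induction j, h2 using Nat.le_induction with
    | base => intro _; exact le_refl _
    | succ j hij ih =>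
      intro h3
      have h4 := ih (by omega)
      have h5 := (hab (j+1) (by omega) (by omega)).1
      have h6 := (hab j (by omega) (by omega)).2
      linarith
  set N : ℕ → ℝ := fun i => ∏ j ∈ Icc 1 (k+1), (b i - a j) with hN_def
  set D : ℕ → ℝ := fun i => ∏ j ∈ (Icc 1 k).erase i, (b i - b j) with hD_def
  set c : ℕ → ℝ := fun i => if 1 ≤ i ∧ i ≤ k then -(N i / D i) else 0 with hc_def
  have hD_ne : ∀ i, 1 ≤ i → i ≤ k → D i ≠ 0 := by
    intro i h1 h2
    apply Finset.prod_ne_zero_iff.2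
    intro j hj
    rw [Finset.mem_erase, Finset.mem_Icc] at hj
    exact sub_ne_zero.2 (hinj i j h1 h2 hj.2.1 hj.2.2 (Ne.symm hj.1))
  have hsign : ∀ i, 1 ≤ i → i ≤ k → N i * D i ≤ 0 := by
    intro i h1 h2
    have hsplitN : Icc 1 (k+1) = Icc 1 i ∪ Ioc i (k+1) := by
      ext j
      simp only [Finset.mem_Icc, Finset.mem_union, Finset.mem_Ioc]
      omega
    have hdisjN : Disjoint (Icc 1 i) (Ioc i (k+1)) := by
      rw [Finset.disjoint_left]
      intro x hx hx'
      rw [Finset.mem_Icc] at hx; rw [Finset.mem_Ioc] at hx'; omega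
    have hsplitD : (Icc 1 k).erase i = Ico 1 i ∪ Ioc i k := by
      ext j
      simp only [Finset.mem_erase, Finset.mem_Icc, Finset.mem_union, Finset.mem_Ico,
        Finset.mem_Ioc]
      omega
    have hdisjD : Disjoint (Ico 1 i) (Ioc i k) := by
      rw [Finset.disjoint_left]
      intro x hx hx'
      rw [Finset.mem_Ico] at hx; rw [Finset.mem_Ioc] at hx'; omega
    have hN : N i = (-1)^i *
        ((∏ j ∈ Icc 1 i, (a j - b i)) * ∏ j ∈ Ioc i (k+1), (b i - a j)) := by
      rw [hN_def]
      dsimp only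
      rw [hsplitN, Finset.prod_union hdisjN, prod_neg_sign (s := Icc 1 i)]
      simp only [neg_sub, Nat.card_Icc, Nat.add_sub_cancel]
      ring
    have hD : D i = (-1)^(i-1) *
        ((∏ j ∈ Ico 1 i, (b j - b i)) * ∏ j ∈ Ioc i k, (b i - b j)) := by
      rw [hD_def]
      dsimp only
      rw [hsplitD, Finset.prod_union hdisjD, prod_neg_sign (s := Ico 1 i)]
      simp only [neg_sub, Nat.card_Ico]
      ring
    have hp1 : 0 ≤ ∏ j ∈ Icc 1 i, (a j - b i) := by
      apply Finset.prod_nonneg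
      intro j hj
      rw [Finset.mem_Icc] at hj
      have := ha_anti j i hj.1 hj.2 (by omega)
      have := (hab i h1 h2).1
      linarith
    have hp2 : 0 ≤ ∏ j ∈ Ioc i (k+1), (b i - a j) := by
      apply Finset.prod_nonneg
      intro j hj
      rw [Finset.mem_Ioc] at hj
      have := ha_anti (i+1) j (by omega) (by omega) hj.2
      have := (hab i h1 h2).2
      linarith
    have hp3 : 0 ≤ ∏ j ∈ Ico 1 i, (b j - b i) := by
      apply Finset.prod_nonneg
      intro j hj
      rw [Finset.mem_Ico] at hj
      have := hb_anti j i hj.1 (by omega) h2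
      linarith
    have hp4 : 0 ≤ ∏ j ∈ Ioc i k, (b i - b j) := by
      apply Finset.prod_nonneg
      intro j hj
      rw [Finset.mem_Ioc] at hj
      have := hb_anti i j h1 (by omega) hj.2
      linarith
    have hodd : (-1:ℝ)^i * (-1)^(i-1) = -1 := by
      rw [← pow_add]
      exact Odd.neg_one_pow ⟨i-1, by omega⟩
    have : N i * D i = ((-1:ℝ)^i * (-1)^(i-1)) *
        (((∏ j ∈ Icc 1 i, (a j - b i)) * ∏ j ∈ Ioc i (k+1), (b i - a j)) *
         ((∏ j ∈ Ico 1 i, (b j - b i)) * ∏ j ∈ Ioc i k, (b i - b j))) := by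
      rw [hN, hD]; ring
    rw [this, hodd]
    have := mul_nonneg (mul_nonneg hp1 hp2) (mul_nonneg hp3 hp4)
    linarith
  have hc_nonneg : ∀ i, 0 ≤ c i := by
    intro i
    rw [hc_def]
    dsimp only
    split_ifs with h
    · have hD := hD_ne i h.1 h.2
      have hs := hsign i h.1 h.2
      have hq : N i / D i = (N i * D i) / (D i * D i) := (mul_div_mul_right _ _ hD).symm
      have : N i / D i ≤ 0 := by
        rw [hq]
        exact div_nonpos_of_nonpos_of_nonneg hs (mul_self_nonneg _)
      linarith
    · exact le_refl _
  refine ⟨c, hc_nonneg, ?_⟩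
  rw [← sub_eq_zero]
  set w : ℝ := (∑ j ∈ Icc 1 (k+1), a j) - ∑ j ∈ Icc 1 k, b j with hw_def
  set f : ℝ[X] := ∏ i ∈ Icc 1 (k+1), (X - C (a i)) with hf_def
  set g : ℝ[X] := ∏ i ∈ Icc 1 k, (X - C (b i)) with hg_def
  set S : ℝ[X] := ∑ i ∈ Icc 1 k, C (c i) * ∏ j ∈ (Icc 1 k).erase i, (X - C (b j))
    with hS_def
  have hfm : f.Monic := monic_prod_of_monic _ _ fun i _ => monic_X_sub_C _
  have hgm : g.Monic := monic_prod_of_monic _ _ fun i _ => monic_X_sub_C _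
  have hfd : f.natDegree = k + 1 := by
    rw [hf_def, natDegree_prod_of_monic _ _ fun i _ => monic_X_sub_C _]
    simp [natDegree_X_sub_C, Nat.card_Icc]
  have hgd : g.natDegree = k := by
    rw [hg_def, natDegree_prod_of_monic _ _ fun i _ => monic_X_sub_C _]
    simp [natDegree_X_sub_C, Nat.card_Icc]
  have hfc_top : f.coeff (k+1) = 1 := by
    have := hfm.coeff_natDegree; rwa [hfd] at this
  have hgc_top : g.coeff k = 1 := by
    have := hgm.coeff_natDegree; rwa [hgd] at this
  have hfck : f.coeff k = -∑ j ∈ Icc 1 (k+1), a j := by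
    have h1 := prod_X_sub_C_nextCoeff (s := Icc 1 (k+1)) a
    rw [nextCoeff_of_natDegree_pos (by rw [hfd]; omega), hfd] at h1
    simpa using h1
  have hgck : g.coeff (k-1) = -∑ j ∈ Icc 1 k, b j := by
    have h1 := prod_X_sub_C_nextCoeff (s := Icc 1 k) b
    rw [nextCoeff_of_natDegree_pos (by rw [hgd]; omega), hgd] at h1
    exact h1
  have hf0 : ∀ m, k + 1 < m → f.coeff m = 0 := by
    intro m hm
    exact coeff_eq_zero_of_natDegree_lt (by rw [hfd]; omega)
  have hg0 : ∀ m, k < m → g.coeff m = 0 := by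
    intro m hm
    exact coeff_eq_zero_of_natDegree_lt (by rw [hgd]; omega)
  have hS0 : ∀ m, k ≤ m → S.coeff m = 0 := by
    intro m hm
    rw [hS_def, finset_sum_coeff]
    apply Finset.sum_eq_zero
    intro i hi
    apply coeff_eq_zero_of_natDegree_lt
    calc (C (c i) * ∏ j ∈ (Icc 1 k).erase i, (X - C (b j))).natDegree
        ≤ (∏ j ∈ (Icc 1 k).erase i, (X - C (b j))).natDegree := natDegree_C_mul_le _ _
      _ ≤ ∑ j ∈ (Icc 1 k).erase i, (X - C (b j)).natDegree := natDegree_prod_le _ _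
      _ = ((Icc 1 k).erase i).card := by simp [natDegree_X_sub_C]
      _ < m := by
          rw [Finset.card_erase_of_mem hi, Nat.card_Icc]
          omega
  have hdiffcoeff : ∀ m, k ≤ m → (f - ((X - C w) * g - S)).coeff m = 0 := by
    intro m hm
    have hXg : ∀ n : ℕ, ((X - C w) * g).coeff (n + 1) = g.coeff n - w * g.coeff (n+1) := by
      intro n
      rw [sub_mul, coeff_sub, coeff_X_mul, coeff_C_mul]
    simp only [coeff_sub]
    rcases (show m = k ∨ m = k + 1 ∨ k + 2 ≤ m by omega) with h | h | h
    · rw [h]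
      rw [hS0 k le_rfl, show k = (k - 1) + 1 by omega, hXg (k-1),
        show (k - 1) + 1 = k by omega, hfck, hgck, hgc_top, hw_def]
      ring
    · rw [h]
      rw [hS0 (k+1) (by omega), hXg k, hfc_top, hgc_top, hg0 (k+1) (by omega)]
      ring
    · obtain ⟨n, rfl⟩ : ∃ n, m = n + 1 := ⟨m - 1, by omega⟩
      rw [hS0 _ hm, hXg n, hf0 _ (by omega), hg0 n (by omega), hg0 (n+1) (by omega)]
      ring
  have hdeg : (f - ((X - C w) * g - S)).natDegree < k := by
    rcases eq_or_ne (f - ((X - C w) * g - S)) 0 with h0 | h0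
    · rw [h0]; simpa using (by omega : 0 < k)
    · rw [natDegree_lt_iff_degree_lt h0]
      rw [degree_lt_iff_coeff_zero]
      exact hdiffcoeff
  have heval : ∀ i, 1 ≤ i → i ≤ k → (f - ((X - C w) * g - S)).eval (b i) = 0 := by
    intro i h1 h2
    have hgval : g.eval (b i) = 0 := by
      rw [hg_def, eval_prod]
      apply Finset.prod_eq_zero (Finset.mem_Icc.2 ⟨h1, h2⟩)
      simp
    have hfval : f.eval (b i) = N i := by
      rw [hf_def, eval_prod, hN_def]
      simp [eval_sub]
    have hSval : S.eval (b i) = c i * D i := by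
      rw [hS_def, eval_finset_sum]
      rw [Finset.sum_eq_single i]
      · rw [eval_mul, eval_C, eval_prod]
        congr 1
        rw [hD_def]
        simp [eval_sub]
      · intro j hj hne
        rw [eval_mul, eval_prod]
        have : i ∈ ((Icc 1 k).erase j) :=
          Finset.mem_erase.2 ⟨fun h => hne h.symm, Finset.mem_Icc.2 ⟨h1, h2⟩⟩
        rw [Finset.prod_eq_zero this (by simp)]
        ring
      · intro h
        exact absurd (Finset.mem_Icc.2 ⟨h1, h2⟩) h
    have hci : c i = -(N i / D i) := by rw [hc_def]; simp [h1, h2]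
    have hDne := hD_ne i h1 h2
    rw [eval_sub, eval_sub, eval_mul, hgval, hfval, hSval, hci]
    rw [neg_mul, div_mul_cancel₀ _ hDne]
    ring
  have hzero : (f - ((X - C w) * g - S)) = 0 := by
    apply Polynomial.eq_zero_of_natDegree_lt_card_of_eval_eq_zero' _ ((Icc 1 k).image b)
    · intro x hx
      obtain ⟨i, hi, rfl⟩ := Finset.mem_image.1 hx
      rw [Finset.mem_Icc] at hi
      exact heval i hi.1 hi.2
    · rw [Finset.card_image_of_injOn]
      · rw [Nat.card_Icc]; omega
      · intro x hx y hy hxy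
        by_contra hne
        rw [Finset.coe_Icc, Set.mem_Icc] at hx hy
        exact hinj x y hx.1 hx.2 hy.1 hy.2 hne hxy
  exact hzero


def shiftEmb (i0 : ℕ) : ℕ ↪ ℕ :=
  ⟨fun j => if j ≤ i0 then j else j + 1, by
    intro x y h; dsimp at h; split_ifs at h <;> omega⟩

lemma shiftEmb_apply (i0 j : ℕ) : shiftEmb i0 j = if j ≤ i0 then j else j + 1 := rfl

lemma shiftEmb_le {i0 j : ℕ} (h : j ≤ i0) : shiftEmb i0 j = j := by simp [shiftEmb_apply, h]
lemma shiftEmb_gt {i0 j : ℕ} (h : i0 < j) : shiftEmb i0 j = j + 1 := by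
  simp [shiftEmb_apply]; omega

lemma shiftEmb_map_Icc {i0 k : ℕ} (h : i0 ≤ k) :
    (Finset.Icc 1 k).map (shiftEmb i0) = (Finset.Icc 1 (k+1)).erase (i0+1) := by
  ext j
  simp only [Finset.mem_map, Finset.mem_Icc, Finset.mem_erase]
  constructor
  · rintro ⟨x, hx, rfl⟩
    simp only [shiftEmb_apply]
    split_ifs <;> omega
  · intro ⟨hne, h1, h2⟩
    refine ⟨if j ≤ i0 then j else j - 1, ?_, ?_⟩
    · split_ifs <;> omega
    · simp only [shiftEmb_apply]
      split_ifs <;> omega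

lemma key (k : ℕ) : 1 ≤ k → ∀ a b : ℕ → ℝ,
    (∀ i, 1 ≤ i → i ≤ k → b i ≤ a i ∧ a (i+1) ≤ b i) →
    ∃ (c : ℕ → ℝ) (w : ℝ), (∀ i, 0 ≤ c i) ∧
      ∏ i ∈ Icc 1 (k+1), (X - C (a i)) =
        (X - C w) * ∏ i ∈ Icc 1 k, (X - C (b i))
        - ∑ i ∈ Icc 1 k, C (c i) * ∏ j ∈ (Icc 1 k).erase i, (X - C (b j)) := by
  induction k using Nat.strong_induction_on with
  | _ k ih =>
  intro hk a b hab
  have hb_step : ∀ i, 1 ≤ i → i < k → b (i+1) ≤ b i := by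
    intro i h1 h2
    have := (hab (i+1) (by omega) (by omega)).1
    have := (hab i h1 (by omega)).2
    linarith
  have hb_anti : ∀ i j, 1 ≤ i → i ≤ j → j ≤ k → b j ≤ b i := by
    intro i j h1 h2 h3
    revert h3
    induction j, h2 using Nat.le_induction with
    | base => intro _; exact le_refl _
    | succ j hij ih2 =>
      intro h3
      have h4 := ih2 (by omega)
      have h5 := hb_step j (by omega) (by omega)
      linarith
  by_cases hrep : ∃ i, 1 ≤ i ∧ i < k ∧ b i = b (i+1)
  · obtain ⟨i0, hi1, hi2, heq⟩ := hrep
    obtain ⟨k', rfl⟩ : ∃ k', k = k' + 1 := ⟨k-1, by omega⟩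
    have hi0k' : i0 ≤ k' := by omega
    have hk' : 1 ≤ k' := by omega
    have hab' : ∀ i, 1 ≤ i → i ≤ k' →
        b (shiftEmb i0 i) ≤ a (shiftEmb i0 i) ∧
        a (shiftEmb i0 (i+1)) ≤ b (shiftEmb i0 i) := by
      intro i h1 h2
      rcases lt_trichotomy i i0 with h | h | h
      · rw [shiftEmb_le (by omega), shiftEmb_le (by omega : i + 1 ≤ i0)]
        exact hab i h1 (by omega)
      · subst h
        rw [shiftEmb_le (le_refl i), shiftEmb_gt (by omega)]
        refine ⟨(hab i h1 (by omega)).1, ?_⟩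
        have := (hab (i+1) (by omega) (by omega)).2
        rw [← heq] at this
        exact this
      · rw [shiftEmb_gt h, shiftEmb_gt (by omega)]
        exact hab (i+1) (by omega) (by omega)
    obtain ⟨c', w', hc', hid'⟩ := ih k' (by omega) hk' _ _ hab'
    have hmapk' : (Icc 1 k').map (shiftEmb i0) = (Icc 1 (k'+1)).erase (i0+1) :=
      shiftEmb_map_Icc hi0k'
    have hmapk : (Icc 1 (k'+1)).map (shiftEmb i0) = (Icc 1 (k'+2)).erase (i0+1) :=
      shiftEmb_map_Icc (by omega)
    have ha_eq : a (i0+1) = b i0 := by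
      have h1 := (hab (i0+1) (by omega) (by omega)).1
      have h2 := (hab i0 hi1 (by omega)).2
      rw [← heq] at h1
      linarith
    set c : ℕ → ℝ := fun i =>
      if i = i0 + 1 then 0 else if i ≤ i0 then c' i else c' (i-1) with hc_def
    refine ⟨c, w', ?_, ?_⟩
    · intro i
      rw [hc_def]
      dsimp only
      split_ifs <;> first | exact le_refl _ | exact hc' _
    have hf : ∏ i ∈ Icc 1 (k'+2), (X - C (a i))
        = (X - C (b i0)) * ∏ i ∈ Icc 1 (k'+1), (X - C (a (shiftEmb i0 i))) := by
      rw [← Finset.mul_prod_erase _ _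
          (show i0+1 ∈ Icc 1 (k'+2) from Finset.mem_Icc.2 ⟨by omega, by omega⟩),
        ha_eq, ← hmapk, Finset.prod_map]
    have hg : ∏ i ∈ Icc 1 (k'+1), (X - C (b i))
        = (X - C (b i0)) * ∏ i ∈ Icc 1 k', (X - C (b (shiftEmb i0 i))) := by
      rw [← Finset.mul_prod_erase _ _
          (show i0+1 ∈ Icc 1 (k'+1) from Finset.mem_Icc.2 ⟨by omega, by omega⟩),
        ← heq, ← hmapk', Finset.prod_map]
    have hsum : ∑ i ∈ Icc 1 (k'+1), C (c i) * ∏ j ∈ (Icc 1 (k'+1)).erase i, (X - C (b j))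
        = (X - C (b i0)) * ∑ i ∈ Icc 1 k',
            C (c' i) * ∏ j ∈ (Icc 1 k').erase i, (X - C (b (shiftEmb i0 j))) := by
      rw [← Finset.sum_erase_add _ _
          (show i0+1 ∈ Icc 1 (k'+1) from Finset.mem_Icc.2 ⟨by omega, by omega⟩)]
      have hc0 : c (i0+1) = 0 := by simp [hc_def]
      rw [hc0]
      simp only [map_zero, zero_mul, add_zero]
      rw [← hmapk', Finset.sum_map, Finset.mul_sum]
      apply Finset.sum_congr rfl
      intro j hj
      rw [Finset.mem_Icc] at hj
      have hejne : shiftEmb i0 j ≠ i0 + 1 := by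
        by_cases h : j ≤ i0
        · rw [shiftEmb_le h]; omega
        · rw [shiftEmb_gt (by omega)]; omega
      have hej : c (shiftEmb i0 j) = c' j := by
        rw [hc_def]
        dsimp only
        rw [if_neg hejne]
        by_cases h : j ≤ i0
        · rw [shiftEmb_le h, if_pos h]
        · rw [shiftEmb_gt (by omega)]
          rw [if_neg (by omega)]
          norm_num
      have hmem : i0+1 ∈ (Icc 1 (k'+1)).erase (shiftEmb i0 j) :=
        Finset.mem_erase.2 ⟨Ne.symm hejne, Finset.mem_Icc.2 ⟨by omega, by omega⟩⟩
      have hprod : ∏ l ∈ (Icc 1 (k'+1)).erase (shiftEmb i0 j), (X - C (b l))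
          = (X - C (b i0)) * ∏ l ∈ (Icc 1 k').erase j, (X - C (b (shiftEmb i0 l))) := by
        rw [← Finset.mul_prod_erase _ _ hmem, ← heq]
        congr 1
        rw [Finset.erase_right_comm, ← hmapk', ← Finset.map_erase, Finset.prod_map]
      rw [hej, hprod]
      ring
    rw [hf, hg, hsum, hid']
    ring
  · push_neg at hrep
    have hinj : ∀ i j, 1 ≤ i → i ≤ k → 1 ≤ j → j ≤ k → i ≠ j → b i ≠ b j := by
      have key : ∀ i j, 1 ≤ i → i < j → j ≤ k → b i ≠ b j := by
        intro i j h1 h2 h3 heq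
        have e1 : b (i+1) ≤ b i := hb_step i h1 (by omega)
        have e2 : b j ≤ b (i+1) := hb_anti (i+1) j (by omega) (by omega) h3
        exact hrep i h1 (by omega) (by linarith [heq ▸ e2])
      intro i j h1 h2 h3 h4 hne
      rcases lt_or_gt_of_ne hne with h | h
      · exact key i j h1 h h4
      · exact fun heq => key j i h3 h h2 heq.symm
    obtain ⟨c, hc, hid⟩ := keyDistinct k hk a b hab hinj
    exact ⟨c, _, hc, hid⟩


lemma prod_fin_icc {M : Type*} [CommMonoid M] (k : ℕ) (u : ℕ → M) :
    ∏ x : Fin k, u ((x:ℕ)+1) = ∏ i ∈ Icc 1 k, u i := by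
  rw [Fin.prod_univ_eq_prod_range (fun i => u (i+1)) k]
  rw [show Icc 1 k = Ico 1 (k+1) by rw [Finset.Ico_add_one_right_eq_Icc], Finset.prod_Ico_eq_prod_range]
  simp [Nat.add_comm]

lemma sum_fin_icc {M : Type*} [AddCommMonoid M] (k : ℕ) (u : ℕ → M) :
    ∑ x : Fin k, u ((x:ℕ)+1) = ∑ i ∈ Icc 1 k, u i := by
  rw [Fin.sum_univ_eq_sum_range (fun i => u (i+1)) k]
  rw [show Icc 1 k = Ico 1 (k+1) by rw [Finset.Ico_add_one_right_eq_Icc], Finset.sum_Ico_eq_sum_range]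
  simp [Nat.add_comm]

lemma prod_fin_icc_erase {M : Type*} [CommMonoid M] (k : ℕ) (u : ℕ → M) (x0 : Fin k) :
    ∏ y ∈ Finset.univ.erase x0, u ((y:ℕ)+1)
      = ∏ j ∈ (Icc 1 k).erase ((x0:ℕ)+1), u j := by
  apply Finset.prod_bij (fun (y : Fin k) _ => (y:ℕ)+1)
  · intro y hy
    rw [Finset.mem_erase] at hy ⊢
    have := y.isLt
    refine ⟨?_, Finset.mem_Icc.2 ⟨by omega, by omega⟩⟩
    intro h
    exact hy.1 (Fin.ext (by omega))
  · intro y1 h1 y2 h2 h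
    exact Fin.ext (by omega)
  · intro j hj
    rw [Finset.mem_erase, Finset.mem_Icc] at hj
    refine ⟨⟨j - 1, by omega⟩, ?_, by simp; omega⟩
    rw [Finset.mem_erase]
    refine ⟨?_, Finset.mem_univ _⟩
    intro h
    apply hj.1
    have := congrArg Fin.val h
    simp at this
    omega
  · intro y hy
    rfl

lemma charpoly_Zarrow (k : ℕ) (b : ℕ → ℝ) (w : ℝ) (z : ℕ → ℂ) :
    (Zarrow k b w z).charpoly
      = (X - C (w:ℂ)) * ∏ x : Fin k, (X - C ((b ((x:ℕ)+1) : ℝ) : ℂ))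
        - ∑ x : Fin k, C (z ((x:ℕ)+1) * (starRingEnd ℂ) (z ((x:ℕ)+1))) *
            ∏ y ∈ Finset.univ.erase x, (X - C ((b ((y:ℕ)+1) : ℝ) : ℂ)) := by
  classical
  set K := RatFunc ℂ
  set φ : ℂ[X] →+* K := (algebraMap ℂ[X] K : ℂ[X] →+* K) with hφ
  have hφinj : Function.Injective φ := IsFractionRing.injective ℂ[X] K
  apply hφinj
  set d : Fin k → K := fun i => φ (X - C ((b ((i:ℕ)+1) : ℝ) : ℂ)) with hd
  have hd_ne : ∀ i, d i ≠ 0 := by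
    intro i
    simp only [hd]
    intro h
    exact X_sub_C_ne_zero _ (hφinj (by simpa using h))
  set e := finSumFinEquiv (m := k) (n := 1) with he
  have hsub : ((charmatrix (Zarrow k b w z)).map φ).submatrix e e =
      Matrix.fromBlocks (Matrix.diagonal d)
        (Matrix.of fun i (_ : Fin 1) => φ (-(C ((starRingEnd ℂ) (z ((i:ℕ)+1))))))
        (Matrix.of fun (_ : Fin 1) j => φ (-(C (z ((j:ℕ)+1)))))
        (Matrix.of fun _ _ => φ (X - C ((w:ℝ) : ℂ))) := by
    ext i j
    rcases i with i | i <;> rcases j with j | j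
    · by_cases hij : i = j
      · subst hij
        simp [he, Matrix.submatrix_apply, finSumFinEquiv_apply_left, charmatrix_apply_eq,
          Zarrow, hd, Matrix.diagonal_apply_eq, i.isLt]
      · have hne : (Fin.castAdd 1 i) ≠ (Fin.castAdd 1 j) := by
          simp [Fin.ext_iff]
          exact fun h => hij (Fin.ext h)
        simp [he, Matrix.submatrix_apply, finSumFinEquiv_apply_left,
          charmatrix_apply_ne _ _ _ hne, Zarrow, Matrix.diagonal_apply_ne _ hij,
          i.isLt, j.isLt, hij]
    · have hne : (Fin.castAdd 1 i) ≠ (Fin.natAdd k j) := by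
        simp [Fin.ext_iff]
        omega
      simp [he, Matrix.submatrix_apply, finSumFinEquiv_apply_left,
        finSumFinEquiv_apply_right, charmatrix_apply_ne _ _ _ hne, Zarrow, i.isLt]
    · have hne : (Fin.natAdd k i) ≠ (Fin.castAdd 1 j) := by
        simp [Fin.ext_iff]
        omega
      simp [he, Matrix.submatrix_apply, finSumFinEquiv_apply_left,
        finSumFinEquiv_apply_right, charmatrix_apply_ne _ _ _ hne, Zarrow, j.isLt]
    · have hii : i = j := Subsingleton.elim i j
      subst hii
      simp [he, Matrix.submatrix_apply, finSumFinEquiv_apply_right, charmatrix_apply_eq,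
        Zarrow]
  rw [Matrix.charpoly, RingHom.map_det, RingHom.mapMatrix_apply]
  rw [← Matrix.det_submatrix_equiv_self (finSumFinEquiv (m := k) (n := 1)), ← he, hsub]
  haveI hinst : ∀ i, Invertible (d i) := fun i => invertibleOfNonzero (hd_ne i)
  haveI : Invertible d := ⟨fun i => ⅟(d i), funext fun i => invOf_mul_self _,
    funext fun i => mul_invOf_self _⟩
  haveI : Invertible (Matrix.diagonal d) := Matrix.diagonalInvertible d
  rw [Matrix.det_fromBlocks₁₁]
  rw [Matrix.invOf_diagonal_eq]
  rw [Matrix.det_diagonal, Matrix.det_fin_one]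
  simp only [Matrix.sub_apply, Matrix.mul_apply, Matrix.mul_diagonal, Matrix.of_apply,
    map_sub, _root_.map_mul, map_sum, map_prod, map_neg, Finset.univ_unique,
    Finset.sum_singleton]
  have hdval : ∀ i : Fin k, φ X - φ (C ((b ((i:ℕ)+1) : ℝ) : ℂ)) = d i := fun i =>
    (map_sub φ _ _).symm
  simp only [hdval]
  have hinvd : ⅟d = fun i => ⅟(d i) :=
    invOf_eq_right_inv (funext fun i => mul_invOf_self _)
  have hcollapse : ∀ x : Fin k,
      (∑ x1 : Fin k, -φ (C (z ((x1:ℕ)+1))) * Matrix.diagonal (⅟d) x1 x)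
        = -φ (C (z ((x:ℕ)+1))) * ⅟(d x) := by
    intro x
    rw [Finset.sum_eq_single x]
    · rw [Matrix.diagonal_apply_eq, hinvd]
    · intro y _ hy
      rw [Matrix.diagonal_apply_ne _ hy, mul_zero]
    · intro h
      exact absurd (Finset.mem_univ x) h
  simp only [hcollapse]
  rw [mul_sub, Finset.mul_sum]
  congr 1
  · exact mul_comm _ _
  · apply Finset.sum_congr rfl
    intro x _
    rw [← Finset.mul_prod_erase _ _ (Finset.mem_univ x)]
    calc (d x * ∏ i ∈ Finset.univ.erase x, d i) *
          (-φ (C (z ((x:ℕ)+1))) * ⅟(d x) * -φ (C ((starRingEnd ℂ) (z ((x:ℕ)+1)))))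
        = (d x * ⅟(d x)) * (φ (C (z ((x:ℕ)+1))) * φ (C ((starRingEnd ℂ) (z ((x:ℕ)+1)))) *
            ∏ i ∈ Finset.univ.erase x, d i) := by ring
      _ = _ := by rw [mul_invOf_self, one_mul]

/-- Lemma 3.5 of Nishinou–Nohara–Ueda.  If
`a₁ ≥ b₁ ≥ a₂ ≥ ⋯ ≥ a_k ≥ b_k ≥ a_{k+1}` (1-based), then there exist complex numbers
`z₁, …, z_k` and a real number `w` such that the arrow matrix with diagonal
`b₁, …, b_k`, arrow entries `zᵢ` and corner entry `w` has eigenvalues `a₁, …, a_{k+1}`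
counted with multiplicity, i.e. its characteristic polynomial is `∏_{i=1}^{k+1}(X − aᵢ)`. -/
theorem statement3 (k : ℕ) (hk : 1 ≤ k) (a b : ℕ → ℝ)
    (hab : ∀ i, 1 ≤ i → i ≤ k → b i ≤ a i ∧ a (i + 1) ≤ b i) :
    ∃ (z : ℕ → ℂ) (w : ℝ),
      (Zarrow k b w z).charpoly
        = ∏ i ∈ Finset.Icc 1 (k + 1), (X - C (a i : ℂ)) := by
  obtain ⟨c, w, hc, hid⟩ := key k hk a b hab
  refine ⟨fun i => ((Real.sqrt (c i) : ℝ) : ℂ), w, ?_⟩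
  rw [charpoly_Zarrow]
  have hz : ∀ i : ℕ, ((Real.sqrt (c i) : ℝ) : ℂ) * (starRingEnd ℂ) ((Real.sqrt (c i) : ℝ) : ℂ)
      = (((c i) : ℝ) : ℂ) := by
    intro i
    rw [Complex.conj_ofReal, ← Complex.ofReal_mul, Real.mul_self_sqrt (hc i)]
  simp only [hz]
  simp only [prod_fin_icc_erase k (fun j => (X - C ((b j : ℝ) : ℂ)))]
  rw [prod_fin_icc k (fun j => (X - C ((b j : ℝ) : ℂ))),
    sum_fin_icc k (fun j => C ((c j : ℝ) : ℂ) *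
      ∏ l ∈ Finset.Icc 1 k |>.erase j, (X - C ((b l : ℝ) : ℂ)))]
  have hmap := congrArg (Polynomial.map (algebraMap ℝ ℂ)) hid
  simp only [Polynomial.map_sub, Polynomial.map_mul, Polynomial.map_prod, Polynomial.map_sum,
    Polynomial.map_X, Polynomial.map_C, Complex.coe_algebraMap] at hmap
  exact hmap.symm
end

section
/- Let 1 ≤ j and ℓ ≥ 1 with j + ℓ ≤ k, and suppose b_j > a_{j+1} = b_{j+1} = ⋯ = a_{j+ℓ} = b_{j+ℓ} > a_{j+ℓ+1}. Let a′ = (a₁, …, a_j, a_{j+ℓ+1}, …, a_{k+1}) be obtained from a by deleting a_{j+1}, …, a_{j+ℓ}, and let b′ = (b₁, …, b_j, b_{j+ℓ+1}, …, b_k) be obtained from b by deleting b_{j+1}, …, b_{j+ℓ}. Then z = (z₁, …, z_k) ∈ Ã_{k+1}(a, b) if and only if z_{j+1} = ⋯ = z_{j+ℓ} = 0 and (z₁, …, z_j, z_{j+ℓ+1}, …, z_k) ∈ Ã_{k+1−ℓ}(a′, b′). -/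
open Polynomial

/-- The matrix `Z_{(a,b)}(z)`: the arrow matrix with corner entry
`z_{k+1} = Σ_{i=1}^{k+1} aᵢ − Σ_{i=1}^{k} bᵢ`. -/
def Zab (k : ℕ) (a b : ℕ → ℝ) (z : ℕ → ℂ) : Matrix (Fin (k + 1)) (Fin (k + 1)) ℂ :=
  Zarrow k b ((∑ i ∈ Finset.Icc 1 (k + 1), a i) - ∑ i ∈ Finset.Icc 1 k, b i) z

/-- `Ã_{k+1}(a, b)`: those `z` (with relevant coordinates `z 1, …, z k`) for which
`Z_{(a,b)}(z)` has characteristic polynomial `∏_{i=1}^{k+1}(X − aᵢ)`. -/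
def Atilde (k : ℕ) (a b : ℕ → ℝ) : Set (ℕ → ℂ) :=
  {z | (Zab k a b z).charpoly = ∏ i ∈ Finset.Icc 1 (k + 1), (X - C (a i : ℂ))}


section helpers
open Matrix Finset

lemma arrow_det_field {F : Type*} [Field F] (k : ℕ) (d c r : Fin k → F) (w : F)
    (hd : ∀ i, d i ≠ 0) :
    (Matrix.fromBlocks (Matrix.diagonal d) (Matrix.of fun i (_ : Fin 1) => c i)
      (Matrix.of fun (_ : Fin 1) j => r j) (Matrix.of fun _ _ => w)).det =
      w * ∏ i, d i - ∑ i, r i * c i * ∏ m ∈ Finset.univ.erase i, d m := by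
  haveI : Invertible d := ⟨fun i => (d i)⁻¹, funext fun i => inv_mul_cancel₀ (hd i),
    funext fun i => mul_inv_cancel₀ (hd i)⟩
  haveI := Matrix.diagonalInvertible d
  rw [Matrix.det_fromBlocks₁₁, Matrix.invOf_diagonal_eq, Matrix.det_diagonal, Matrix.det_fin_one]
  have hinv : ⅟d = fun i => (d i)⁻¹ :=
    invOf_eq_right_inv (funext fun i => mul_inv_cancel₀ (hd i))
  have hentry : (Matrix.of (fun (_ : Fin 1) (_ : Fin 1) => w) - Matrix.of (fun (_ : Fin 1) j => r j) * Matrix.diagonal (⅟d) * Matrix.of (fun i (_ : Fin 1) => c i)) 0 0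
      = w - ∑ i, r i * (d i)⁻¹ * c i := by
    simp [Matrix.mul_apply, Matrix.sub_apply, Matrix.diagonal_apply, hinv, Finset.sum_mul]
  rw [hentry, mul_sub, Finset.mul_sum]
  congr 1
  · ring
  · refine Finset.sum_congr rfl fun i _ => ?_
    rw [← Finset.mul_prod_erase Finset.univ d (Finset.mem_univ i)]
    field_simp
    linear_combination (∏ x ∈ univ.erase i, d x) * r i * c i * mul_inv_cancel₀ (hd i)

lemma finProdIcc {M : Type*} [CommMonoid M] (k : ℕ) (g : ℕ → M) :
    ∏ i : Fin k, g ((i : ℕ) + 1) = ∏ i ∈ Finset.Icc 1 k, g i := by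
  refine Finset.prod_bij' (fun m _ => (m : ℕ) + 1)
    (fun n hn => (⟨n - 1, by simp [Finset.mem_Icc] at hn; omega⟩ : Fin k))
    (fun m _ => ?_) (fun n hn => Finset.mem_univ _) (fun m _ => ?_) (fun n hn => ?_)
    (fun m _ => rfl)
  · simp [Finset.mem_Icc]
  · simp
  · simp [Finset.mem_Icc] at hn; simp; omega

lemma finProdIccErase {M : Type*} [CommMonoid M] (k : ℕ) (g : ℕ → M) (i : Fin k) :
    ∏ m ∈ Finset.univ.erase i, g ((m : ℕ) + 1) =
      ∏ m ∈ (Finset.Icc 1 k).erase ((i : ℕ) + 1), g m := by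
  refine Finset.prod_bij' (fun m _ => (m : ℕ) + 1)
    (fun n hn => (⟨n - 1, by simp [Finset.mem_erase, Finset.mem_Icc] at hn; omega⟩ : Fin k))
    (fun m hm => ?_) (fun n hn => ?_) (fun m _ => ?_) (fun n hn => ?_)
    (fun m _ => rfl)
  · simp only [Finset.mem_erase, Finset.mem_Icc] at hm ⊢
    have := m.isLt
    constructor
    · simp only [ne_eq, Nat.add_right_cancel_iff]
      intro h; exact hm.1 (Fin.ext h)
    · omega
  · simp only [Finset.mem_erase, Finset.mem_Icc] at hn
    simp only [Finset.mem_erase, Finset.mem_univ, and_true, ne_eq]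
    intro h; apply hn.1; rw [Fin.ext_iff] at h; simp at h; omega
  · simp
  · simp only [Finset.mem_erase, Finset.mem_Icc] at hn; simp; omega

lemma finSumIcc {M : Type*} [AddCommMonoid M] (k : ℕ) (g : ℕ → M) :
    ∑ i : Fin k, g ((i : ℕ) + 1) = ∑ i ∈ Finset.Icc 1 k, g i := by
  refine Finset.sum_bij' (fun m _ => (m : ℕ) + 1)
    (fun n hn => (⟨n - 1, by simp [Finset.mem_Icc] at hn; omega⟩ : Fin k))
    (fun m _ => ?_) (fun n hn => Finset.mem_univ _) (fun m _ => ?_) (fun n hn => ?_)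
    (fun m _ => rfl)
  · simp [Finset.mem_Icc]
  · simp
  · simp [Finset.mem_Icc] at hn; simp; omega

lemma Zarrow_charpoly (k : ℕ) (b : ℕ → ℝ) (w : ℝ) (z : ℕ → ℂ) :
    (Zarrow k b w z).charpoly =
      (X - C (w : ℂ)) * ∏ i ∈ Finset.Icc 1 k, (X - C (b i : ℂ)) -
        ∑ i ∈ Finset.Icc 1 k, C ((Complex.normSq (z i) : ℂ)) *
          ∏ m ∈ (Finset.Icc 1 k).erase i, (X - C (b m : ℂ)) := by
  set d : Fin k → ℂ := fun i => (b ((i : ℕ) + 1) : ℂ) with hdd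
  set cc : Fin k → ℂ := fun i => (starRingEnd ℂ) (z ((i : ℕ) + 1)) with hcc
  set rr : Fin k → ℂ := fun i => z ((i : ℕ) + 1) with hrr
  set M : Matrix (Fin k ⊕ Fin 1) (Fin k ⊕ Fin 1) ℂ :=
    Matrix.fromBlocks (Matrix.diagonal d) (Matrix.of fun i (_ : Fin 1) => cc i)
      (Matrix.of fun (_ : Fin 1) j => rr j) (Matrix.of fun _ _ => (w : ℂ)) with hM
  have key : ∀ p q, Zarrow k b w z (finSumFinEquiv p) (finSumFinEquiv q) = M p q := by
    rintro (i | i) (j | j) <;>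
      simp only [Zarrow, hM, Matrix.of_apply, finSumFinEquiv_apply_left,
        finSumFinEquiv_apply_right, Fin.coe_castAdd, Fin.coe_natAdd,
        Matrix.fromBlocks_apply₁₁, Matrix.fromBlocks_apply₁₂, Matrix.fromBlocks_apply₂₁,
        Matrix.fromBlocks_apply₂₂, Matrix.diagonal_apply]
    · have hi := i.isLt
      have hj := j.isLt
      simp only [if_pos hi, if_pos hj]
      by_cases h : i = j
      · subst h; simp; rfl
      · rw [if_neg, if_neg h]
        intro hc
        exact h (Fin.ext (by simpa using congrArg Fin.val hc))
    · have hi := i.isLt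
      have : ¬ ((k + (j : ℕ)) < k) := by omega
      simp [hi, this]; rfl
    · have hj := j.isLt
      have : ¬ ((k + (i : ℕ)) < k) := by omega
      simp [hj, this]; rfl
    · have h1 : ¬ ((k + (i : ℕ)) < k) := by omega
      have h2 : ¬ ((k + (j : ℕ)) < k) := by omega
      simp [h1, h2]
  have hZ : Zarrow k b w z = Matrix.reindex finSumFinEquiv finSumFinEquiv M := by
    ext i j
    rw [Matrix.reindex_apply, Matrix.submatrix_apply,
      ← key (finSumFinEquiv.symm i) (finSumFinEquiv.symm j),
      Equiv.apply_symm_apply, Equiv.apply_symm_apply]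
  rw [hZ, Matrix.charpoly_reindex]
  -- charmatrix of M is an arrow matrix over ℂ[X]
  have hchar : charmatrix M = Matrix.fromBlocks
      (Matrix.diagonal fun i => (X : ℂ[X]) - C (d i))
      (Matrix.of fun i (_ : Fin 1) => -C (cc i))
      (Matrix.of fun (_ : Fin 1) j => -C (rr j))
      (Matrix.of fun _ _ => (X : ℂ[X]) - C (w : ℂ)) := by
    ext p q
    rcases p with i | i <;> rcases q with j | j
    · by_cases h : i = j
      · subst h
        rw [charmatrix_apply_eq]
        simp [hM]
      · rw [charmatrix_apply_ne _ _ _ (by simp [h])]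
        simp [hM, Matrix.diagonal_apply, h, Sum.inl.injEq]
    · rw [charmatrix_apply_ne _ _ _ (by simp)]
      simp [hM]
    · rw [charmatrix_apply_ne _ _ _ (by simp)]
      simp [hM]
    · have : i = j := Subsingleton.elim i j
      subst this
      rw [charmatrix_apply_eq]
      simp [hM]
  rw [Matrix.charpoly, hchar]
  -- now map into RatFunc ℂ
  set f : ℂ[X] →+* RatFunc ℂ := algebraMap ℂ[X] (RatFunc ℂ) with hf
  have hfinj : Function.Injective f := IsFractionRing.injective ℂ[X] (RatFunc ℂ)
  apply hfinj
  rw [RingHom.map_det, RingHom.mapMatrix_apply]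
  have hmap : (Matrix.fromBlocks
      (Matrix.diagonal fun i => (X : ℂ[X]) - C (d i))
      (Matrix.of fun i (_ : Fin 1) => -C (cc i))
      (Matrix.of fun (_ : Fin 1) j => -C (rr j))
      (Matrix.of fun _ _ => (X : ℂ[X]) - C (w : ℂ))).map f =
    Matrix.fromBlocks
      (Matrix.diagonal fun i => f ((X : ℂ[X]) - C (d i)))
      (Matrix.of fun i (_ : Fin 1) => f (-C (cc i)))
      (Matrix.of fun (_ : Fin 1) j => f (-C (rr j)))
      (Matrix.of fun _ _ => f ((X : ℂ[X]) - C (w : ℂ))) := by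
    ext p q
    rcases p with i | i <;> rcases q with j | j <;>
      simp [Matrix.diagonal_apply, apply_ite f]
  rw [hmap, arrow_det_field _ _ _ _ _
    (fun i => (map_ne_zero_iff f hfinj).mpr (X_sub_C_ne_zero _))]
  have hg : ∀ i : Fin k,
      (C ((Complex.normSq (z ((i : ℕ) + 1)) : ℂ)) *
        ∏ m ∈ (Finset.Icc 1 k).erase ((i : ℕ) + 1), ((X : ℂ[X]) - C (b m : ℂ)))
      = C (rr i * cc i) * ∏ m ∈ Finset.univ.erase i, ((X : ℂ[X]) - C (d m)) := by
    intro i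
    rw [← finProdIccErase k (fun m => (X : ℂ[X]) - C (b m : ℂ)) i]
    congr 1
    rw [hrr, hcc]
    simp [Complex.mul_conj]
  conv_rhs => rw [← finProdIcc k (fun i => (X : ℂ[X]) - C (b i : ℂ)),
    ← finSumIcc k (fun i => C ((Complex.normSq (z i) : ℂ)) *
      ∏ m ∈ (Finset.Icc 1 k).erase i, ((X : ℂ[X]) - C (b m : ℂ)))]
  simp only [hg]
  simp only [map_sub, _root_.map_mul, map_prod, map_sum, map_neg, C_mul]
  congr 1
  refine Finset.sum_congr rfl fun i _ => ?_
  ring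

lemma phiProd {M : Type*} [CommMonoid M] (j l K : ℕ) (hj : 1 ≤ j) (hjl : j + l ≤ K) (g : ℕ → M) :
    ∏ m ∈ Finset.Icc 1 (K - l), g (if m ≤ j then m else m + l) =
      ∏ m ∈ Finset.Icc 1 K \ Finset.Icc (j + 1) (j + l), g m := by
  refine Finset.prod_bij' (fun m _ => if m ≤ j then m else m + l)
    (fun n _ => if n ≤ j then n else n - l) ?_ ?_ ?_ ?_ ?_ <;>
    intro m hm <;>
    simp only [Finset.mem_Icc, Finset.mem_sdiff, not_and, not_le, Finset.mem_Icc] at hm ⊢ <;>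
    split_ifs <;> first | rfl | omega

lemma phiSum {M : Type*} [AddCommMonoid M] (j l K : ℕ) (hj : 1 ≤ j) (hjl : j + l ≤ K) (g : ℕ → M) :
    ∑ m ∈ Finset.Icc 1 (K - l), g (if m ≤ j then m else m + l) =
      ∑ m ∈ Finset.Icc 1 K \ Finset.Icc (j + 1) (j + l), g m := by
  refine Finset.sum_bij' (fun m _ => if m ≤ j then m else m + l)
    (fun n _ => if n ≤ j then n else n - l) ?_ ?_ ?_ ?_ ?_ <;>
    intro m hm <;>
    simp only [Finset.mem_Icc, Finset.mem_sdiff, not_and, not_le, Finset.mem_Icc] at hm ⊢ <;>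
    split_ifs <;> first | rfl | omega

lemma phiProdErase {M : Type*} [CommMonoid M] (j l K : ℕ) (hj : 1 ≤ j) (hjl : j + l ≤ K)
    (g : ℕ → M) (i0 : ℕ) (hi0 : i0 ∈ Finset.Icc 1 (K - l)) :
    ∏ m ∈ (Finset.Icc 1 (K - l)).erase i0, g (if m ≤ j then m else m + l) =
      ∏ m ∈ (Finset.Icc 1 K \ Finset.Icc (j + 1) (j + l)).erase
        (if i0 ≤ j then i0 else i0 + l), g m := by
  simp only [Finset.mem_Icc] at hi0
  refine Finset.prod_bij' (fun m _ => if m ≤ j then m else m + l)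
    (fun n _ => if n ≤ j then n else n - l) ?_ ?_ ?_ ?_ ?_ <;>
    intro m hm <;>
    simp only [Finset.mem_erase, Finset.mem_Icc, Finset.mem_sdiff, not_and, not_le] at hm ⊢ <;>
    split_ifs at hm ⊢ <;> first | rfl | omega

end helpers

/-- case (3), deletion.  Suppose `1 ≤ j`, `ℓ ≥ 1`, `j + ℓ ≤ k` and
`b_j > a_{j+1} = b_{j+1} = ⋯ = a_{j+ℓ} = b_{j+ℓ} > a_{j+ℓ+1}` (1-based).  Let `a′` be obtained
from `a` by deleting `a_{j+1}, …, a_{j+ℓ}` and `b′` from `b` by deleting `b_{j+1}, …, b_{j+ℓ}`.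
Then `z ∈ Ã_{k+1}(a,b)` iff `z_{j+1} = ⋯ = z_{j+ℓ} = 0` and
`(z₁, …, z_j, z_{j+ℓ+1}, …, z_k) ∈ Ã_{k+1−ℓ}(a′, b′)`. -/
theorem statement6 (k : ℕ) (hk : 1 ≤ k) (a b : ℕ → ℝ)
    (hab : ∀ i, 1 ≤ i → i ≤ k → b i ≤ a i ∧ a (i + 1) ≤ b i)
    (j l : ℕ) (hj : 1 ≤ j) (hl : 1 ≤ l) (hjl : j + l ≤ k)
    (hlt1 : a (j + 1) < b j)
    (heq : ∀ m, j + 1 ≤ m → m ≤ j + l → a m = a (j + 1) ∧ b m = a (j + 1))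
    (hlt2 : a (j + l + 1) < a (j + 1)) :
    ∀ z : ℕ → ℂ,
      z ∈ Atilde k a b ↔
        ((∀ m, j + 1 ≤ m → m ≤ j + l → z m = 0) ∧
          (fun m => if m ≤ j then z m else z (m + l)) ∈
            Atilde (k - l) (fun m => if m ≤ j then a m else a (m + l))
              (fun m => if m ≤ j then b m else b (m + l))) := by
  intro z
  set cR : ℝ := a (j + 1) with hcR
  set B : Finset ℕ := Finset.Icc (j + 1) (j + l) with hB
  set S0 : Finset ℕ := Finset.Icc 1 k \ B with hS0
  set T0 : Finset ℕ := Finset.Icc 1 (k + 1) \ B with hT0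
  set w : ℝ := (∑ i ∈ Finset.Icc 1 (k + 1), a i) - ∑ i ∈ Finset.Icc 1 k, b i with hw
  have hBsubS : B ⊆ Finset.Icc 1 k := by
    intro x hx; simp only [hB, Finset.mem_Icc] at hx ⊢; omega
  have hBsubT : B ⊆ Finset.Icc 1 (k + 1) := by
    intro x hx; simp only [hB, Finset.mem_Icc] at hx ⊢; omega
  have hbB : ∀ m ∈ B, b m = cR := by
    intro m hm; simp only [hB, Finset.mem_Icc] at hm; exact (heq m hm.1 hm.2).2
  have haB : ∀ m ∈ B, a m = cR := by
    intro m hm; simp only [hB, Finset.mem_Icc] at hm; exact (heq m hm.1 hm.2).1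
  have hcardB : B.card = l := by simp only [hB, Nat.card_Icc]; omega
  -- monotonicity of a and b
  have hbmono : ∀ m n : ℕ, 1 ≤ m → m ≤ n → n ≤ k → b n ≤ b m := by
    intro m n h1 h2 h3
    induction n with
    | zero => omega
    | succ p ih =>
      rcases Nat.eq_or_lt_of_le h2 with he | hlt
      · rw [he]
      · have hmp : m ≤ p := by omega
        have h1p : 1 ≤ p := le_trans h1 hmp
        calc b (p + 1) ≤ a (p + 1) := (hab (p + 1) (by omega) h3).1
          _ ≤ b p := (hab p h1p (by omega)).2
          _ ≤ b m := ih hmp (by omega)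
  have hamono : ∀ m n : ℕ, 1 ≤ m → m ≤ n → n ≤ k + 1 → a n ≤ a m := by
    intro m n h1 h2 h3
    induction n with
    | zero => omega
    | succ p ih =>
      rcases Nat.eq_or_lt_of_le h2 with he | hlt
      · rw [he]
      · have hmp : m ≤ p := by omega
        have h1p : 1 ≤ p := le_trans h1 hmp
        calc a (p + 1) ≤ b p := (hab p h1p (by omega)).2
          _ ≤ a p := (hab p h1p (by omega)).1
          _ ≤ a m := ih hmp (by omega)
  have hbne : ∀ i ∈ S0, b i ≠ cR := by
    intro i hi
    simp only [hS0, hB, Finset.mem_sdiff, Finset.mem_Icc, not_and, not_le] at hi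
    obtain ⟨⟨hi1, hik⟩, hiB⟩ := hi
    rcases le_or_gt i j with h | h
    · have h1 : b j ≤ b i := hbmono i j hi1 h (by omega)
      intro hc; rw [hc] at h1; exact absurd hlt1 (not_lt.mpr h1)
    · have hi2 : j + l + 1 ≤ i := by
        have := hiB (by omega); omega
      have h1 : b i ≤ a i := (hab i (by omega) hik).1
      have h2 : a i ≤ a (j + l + 1) := hamono (j + l + 1) i (by omega) hi2 (by omega)
      intro hc; rw [hc] at h1
      have : cR ≤ a (j + l + 1) := le_trans h1 h2
      exact absurd hlt2 (not_lt.mpr this)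
  -- polynomial abbreviations
  set cC : ℂ := (cR : ℂ) with hcC
  set Pb0 : ℂ[X] := ∏ i ∈ S0, (X - C (b i : ℂ)) with hPb0
  set A0 : ℂ[X] := ∑ i ∈ S0, C ((Complex.normSq (z i) : ℂ)) *
      ∏ m ∈ S0.erase i, (X - C (b m : ℂ)) with hA0
  set P0 : ℂ[X] := (X - C (w : ℂ)) * Pb0 - A0 with hP0
  set Q0 : ℂ[X] := ∏ i ∈ T0, (X - C (a i : ℂ)) with hQ0
  set σ : ℝ := ∑ i ∈ B, Complex.normSq (z i) with hsig
  set R : ℂ[X] := (X - C cC) * P0 - C ((σ : ℂ)) * Pb0 with hR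
  have hXne : (X - C cC : ℂ[X]) ≠ 0 := X_sub_C_ne_zero cC
  have hpow : (X - C cC : ℂ[X]) ^ l = (X - C cC) ^ (l - 1) * (X - C cC) := by
    rw [← pow_succ]; congr 1; omega
  -- the product over B is a power
  have hprodB : ∀ (f : ℕ → ℝ), (∀ m ∈ B, f m = cR) →
      ∏ i ∈ B, (X - C (f i : ℂ)) = (X - C cC) ^ l := by
    intro f hf
    rw [Finset.prod_congr rfl (fun m hm => by rw [hf m hm]), Finset.prod_const, hcardB]
  -- split of the full b-product
  have hprodS : ∏ i ∈ Finset.Icc 1 k, (X - C (b i : ℂ)) = (X - C cC) ^ l * Pb0 := by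
    rw [← Finset.prod_sdiff hBsubS, ← hS0, hprodB b hbB, mul_comm]
  -- erase-products
  have heraseB : ∀ i ∈ B, ∏ m ∈ (Finset.Icc 1 k).erase i, (X - C (b m : ℂ)) =
      (X - C cC) ^ (l - 1) * Pb0 := by
    intro i hi
    have hiB : j + 1 ≤ i ∧ i ≤ j + l := by simpa [hB, Finset.mem_Icc] using hi
    have hsub : S0 ⊆ (Finset.Icc 1 k).erase i := by
      intro x hx
      simp only [hS0, hB, Finset.mem_sdiff, Finset.mem_Icc, not_and, not_le] at hx
      simp only [Finset.mem_erase, Finset.mem_Icc]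
      obtain ⟨⟨h1, h2⟩, h3⟩ := hx
      refine ⟨?_, h1, h2⟩
      intro hc; subst hc; have := h3 hiB.1; omega
    have hdiff : (Finset.Icc 1 k).erase i \ S0 = B.erase i := by
      obtain ⟨hiB1, hiB2⟩ := hiB
      ext x
      simp only [hS0, hB, Finset.mem_sdiff, Finset.mem_erase, Finset.mem_Icc]
      omega
    rw [← Finset.prod_sdiff hsub, hdiff]
    have : ∏ m ∈ B.erase i, (X - C (b m : ℂ)) = (X - C cC) ^ (l - 1) := by
      rw [Finset.prod_congr rfl (fun m hm => by
        rw [hbB m (Finset.mem_of_mem_erase hm)]), Finset.prod_const,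
        Finset.card_erase_of_mem hi, hcardB]
    rw [this, mul_comm]
  have heraseS0 : ∀ i ∈ S0, ∏ m ∈ (Finset.Icc 1 k).erase i, (X - C (b m : ℂ)) =
      (X - C cC) ^ l * ∏ m ∈ S0.erase i, (X - C (b m : ℂ)) := by
    intro i hi
    have hiS0 : (1 ≤ i ∧ i ≤ k) ∧ ¬(j + 1 ≤ i ∧ i ≤ j + l) := by
      simpa [hS0, hB, Finset.mem_sdiff, Finset.mem_Icc] using hi
    have hsub : B ⊆ (Finset.Icc 1 k).erase i := by
      intro x hx
      simp only [hB, Finset.mem_Icc] at hx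
      simp only [Finset.mem_erase, Finset.mem_Icc]
      refine ⟨?_, by omega, by omega⟩
      intro hc; subst hc; exact hiS0.2 hx
    have hdiff : (Finset.Icc 1 k).erase i \ B = S0.erase i := by
      ext x
      simp only [hS0, hB, Finset.mem_sdiff, Finset.mem_erase, Finset.mem_Icc]
      tauto
    rw [← Finset.prod_sdiff hsub, hdiff, hprodB b hbB, mul_comm]
  -- main identity for P
  have hPeq : (X - C (w : ℂ)) * ∏ i ∈ Finset.Icc 1 k, (X - C (b i : ℂ)) -
      ∑ i ∈ Finset.Icc 1 k, C ((Complex.normSq (z i) : ℂ)) *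
        ∏ m ∈ (Finset.Icc 1 k).erase i, (X - C (b m : ℂ)) =
      (X - C cC) ^ (l - 1) * R := by
    rw [← Finset.sum_sdiff hBsubS, ← hS0, hprodS]
    have h1 : ∑ i ∈ S0, C ((Complex.normSq (z i) : ℂ)) *
        ∏ m ∈ (Finset.Icc 1 k).erase i, (X - C (b m : ℂ)) = (X - C cC) ^ l * A0 := by
      rw [hA0, Finset.mul_sum]
      refine Finset.sum_congr rfl fun i hi => ?_
      rw [heraseS0 i hi]; ring
    have h2 : ∑ i ∈ B, C ((Complex.normSq (z i) : ℂ)) *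
        ∏ m ∈ (Finset.Icc 1 k).erase i, (X - C (b m : ℂ)) =
        C ((σ : ℂ)) * ((X - C cC) ^ (l - 1) * Pb0) := by
      have : ∀ i ∈ B, C ((Complex.normSq (z i) : ℂ)) *
          ∏ m ∈ (Finset.Icc 1 k).erase i, (X - C (b m : ℂ)) =
          C ((Complex.normSq (z i) : ℂ)) * ((X - C cC) ^ (l - 1) * Pb0) := by
        intro i hi; rw [heraseB i hi]
      rw [Finset.sum_congr rfl this, ← Finset.sum_mul]
      congr 1
      rw [hsig]
      push_cast
      rw [map_sum]
    rw [h1, h2, hR, hP0, hpow]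
    ring
  have hQeq : ∏ i ∈ Finset.Icc 1 (k + 1), (X - C (a i : ℂ)) = (X - C cC) ^ l * Q0 := by
    rw [← Finset.prod_sdiff hBsubT, ← hT0, hprodB a haB, mul_comm]
  -- membership on the left
  have hL : z ∈ Atilde k a b ↔ (X - C cC) ^ (l - 1) * R = (X - C cC) ^ l * Q0 := by
    simp only [Atilde, Set.mem_setOf_eq, Zab, ← hw]
    rw [Zarrow_charpoly, hPeq, hQeq]
  -- the reduced data
  have hkl1 : k - l + 1 = k + 1 - l := by omega
  have hw' : ((∑ i ∈ Finset.Icc 1 (k - l + 1), (if i ≤ j then a i else a (i + l))) -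
      ∑ i ∈ Finset.Icc 1 (k - l), (if i ≤ j then b i else b (i + l))) = w := by
    have e1 : ∑ i ∈ Finset.Icc 1 (k - l + 1), (if i ≤ j then a i else a (i + l)) =
        ∑ i ∈ T0, a i := by
      rw [hkl1, hT0, hB, ← phiSum j l (k + 1) hj (by omega) a]
      exact Finset.sum_congr rfl fun i _ => by split_ifs <;> rfl
    have e2 : ∑ i ∈ Finset.Icc 1 (k - l), (if i ≤ j then b i else b (i + l)) =
        ∑ i ∈ S0, b i := by
      rw [hS0, hB, ← phiSum j l k hj (by omega) b]
      exact Finset.sum_congr rfl fun i _ => by split_ifs <;> rfl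
    have e3 : ∑ i ∈ T0, a i = (∑ i ∈ Finset.Icc 1 (k + 1), a i) - l * cR := by
      have := Finset.sum_sdiff hBsubT (f := a)
      rw [← hT0] at this
      have hBa : ∑ i ∈ B, a i = l * cR := by
        rw [Finset.sum_congr rfl haB, Finset.sum_const, hcardB, nsmul_eq_mul]
      linarith
    have e4 : ∑ i ∈ S0, b i = (∑ i ∈ Finset.Icc 1 k, b i) - l * cR := by
      have := Finset.sum_sdiff hBsubS (f := b)
      rw [← hS0] at this
      have hBb : ∑ i ∈ B, b i = l * cR := by
        rw [Finset.sum_congr rfl hbB, Finset.sum_const, hcardB, nsmul_eq_mul]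
      linarith
    rw [e1, e2, e3, e4, hw]; ring
  have hRmem : ((fun m => if m ≤ j then z m else z (m + l)) ∈
      Atilde (k - l) (fun m => if m ≤ j then a m else a (m + l))
        (fun m => if m ≤ j then b m else b (m + l))) ↔ P0 = Q0 := by
    simp only [Atilde, Set.mem_setOf_eq, Zab]
    rw [Zarrow_charpoly]
    have eQ : ∏ i ∈ Finset.Icc 1 (k - l + 1),
        (X - C (((if i ≤ j then a i else a (i + l)) : ℝ) : ℂ)) = Q0 := by
      rw [hQ0, hT0, hB, hkl1, ← phiProd j l (k + 1) hj (by omega) (fun n => X - C ((a n : ℝ) : ℂ))]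
      exact Finset.prod_congr rfl fun i _ => by split_ifs <;> rfl
    have ePb : ∏ i ∈ Finset.Icc 1 (k - l),
        (X - C (((if i ≤ j then b i else b (i + l)) : ℝ) : ℂ)) = Pb0 := by
      rw [hPb0, hS0, hB, ← phiProd j l k hj (by omega) (fun n => X - C ((b n : ℝ) : ℂ))]
      exact Finset.prod_congr rfl fun i _ => by split_ifs <;> rfl
    have eA : ∑ i ∈ Finset.Icc 1 (k - l),
        C ((Complex.normSq (if i ≤ j then z i else z (i + l)) : ℂ)) *
          ∏ m ∈ (Finset.Icc 1 (k - l)).erase i,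
            (X - C (((if m ≤ j then b m else b (m + l)) : ℝ) : ℂ)) = A0 := by
      rw [hA0, hS0, hB, ← phiSum j l k hj (by omega)
        (fun n => C ((Complex.normSq (z n) : ℂ)) *
          ∏ m ∈ (Finset.Icc 1 k \ Finset.Icc (j + 1) (j + l)).erase n, (X - C ((b m : ℝ) : ℂ)))]
      refine Finset.sum_congr rfl fun i hi => ?_
      have h1 : ∏ m ∈ (Finset.Icc 1 (k - l)).erase i,
          (X - C (((if m ≤ j then b m else b (m + l)) : ℝ) : ℂ)) =
          ∏ m ∈ (Finset.Icc 1 k \ Finset.Icc (j + 1) (j + l)).erase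
            (if i ≤ j then i else i + l), (X - C ((b m : ℝ) : ℂ)) := by
        rw [← phiProdErase j l k hj (by omega) (fun n => X - C ((b n : ℝ) : ℂ)) i hi]
        exact Finset.prod_congr rfl fun m _ => by split_ifs <;> rfl
      rw [h1]
      split_ifs <;> rfl
    rw [hw', eQ, ePb, eA]
  -- nonvanishing of Pb0 at cC
  have hPb0ne : Polynomial.eval cC Pb0 ≠ 0 := by
    rw [hPb0, Polynomial.eval_prod]
    rw [Finset.prod_ne_zero_iff]
    intro i hi
    simp only [Polynomial.eval_sub, Polynomial.eval_X, Polynomial.eval_C, sub_ne_zero, hcC]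
    intro hc
    exact hbne i hi (by exact_mod_cast hc.symm)
  rw [hL, hRmem]
  constructor
  · intro h
    have hcanc : R = (X - C cC) * Q0 := by
      rw [hpow, mul_assoc] at h
      exact mul_left_cancel₀ (pow_ne_zero _ hXne) h
    have hev := congrArg (Polynomial.eval cC) hcanc
    rw [hR, hP0] at hev
    simp only [Polynomial.eval_mul, Polynomial.eval_sub, Polynomial.eval_X, Polynomial.eval_C,
      sub_self, zero_mul, zero_sub, neg_eq_zero, mul_eq_zero] at hev
    have hσ0 : σ = 0 := by
      rcases hev with hc | hc
      · exact_mod_cast hc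
      · exact absurd hc hPb0ne
    have hzB : ∀ m, j + 1 ≤ m → m ≤ j + l → z m = 0 := by
      intro m h1 h2
      have hmem : m ∈ B := by simp [hB, Finset.mem_Icc]; omega
      have h0 : Complex.normSq (z m) = 0 :=
        (Finset.sum_eq_zero_iff_of_nonneg
          (fun i (_ : i ∈ B) => Complex.normSq_nonneg (z i))).mp (hsig.symm.trans hσ0) m hmem
      exact Complex.normSq_eq_zero.mp h0
    refine ⟨hzB, ?_⟩
    have hCσ : C ((σ : ℂ)) = 0 := by rw [hσ0]; simp
    rw [hR, hCσ, zero_mul, sub_zero] at hcanc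
    exact mul_left_cancel₀ hXne hcanc
  · rintro ⟨hz, hPQ⟩
    have hσ0 : σ = 0 := by
      rw [hsig]
      refine Finset.sum_eq_zero fun i hi => ?_
      simp only [hB, Finset.mem_Icc] at hi
      rw [hz i hi.1 hi.2]
      simp
    have hCσ : C ((σ : ℂ)) = 0 := by rw [hσ0]; simp
    rw [hR, hCσ, zero_mul, sub_zero, hPQ, hpow]
    ring
end

section
/- Let 1 ≤ j and ℓ ≥ 1 with j + ℓ ≤ k, and suppose b_j > a_{j+1} = a_{j+2} = ⋯ = a_{j+ℓ} > b_{j+ℓ}. Let a′ be obtained from a by deleting a_{j+2}, …, a_{j+ℓ}, and let b′ be obtained from b by deleting b_{j+1}, …, b_{j+ℓ−1}. Then z = (z₁, …, z_k) ∈ Ã_{k+1}(a, b) if and only if z_{j+1} = ⋯ = z_{j+ℓ−1} = 0 and (z₁, …, z_j, z_{j+ℓ}, …, z_k) ∈ Ã_{k−ℓ+2}(a′, b′). -/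
open Polynomial

noncomputable def armPoly (k : ℕ) (b : ℕ → ℝ) (w : ℝ) (z : ℕ → ℂ) : Polynomial ℂ :=
  (X - C (w:ℂ)) * ∏ i ∈ Finset.Icc 1 k, (X - C (b i:ℂ))
  - ∑ i ∈ Finset.Icc 1 k, C (z i * (starRingEnd ℂ) (z i)) *
      ∏ m ∈ (Finset.Icc 1 k).erase i, (X - C (b m:ℂ))

theorem armPoly_succ (k : ℕ) (b : ℕ → ℝ) (w : ℝ) (z : ℕ → ℂ) :
    armPoly (k+1) b w z = (X - C ((b 1 : ℂ))) * armPoly k (fun n => b (n+1)) w (fun n => z (n+1))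
      - C (z 1 * (starRingEnd ℂ) (z 1)) * ∏ i ∈ Finset.Icc 2 (k+1), (X - C (b i : ℂ)) := by
  have hinj : Function.Injective (· + 1 : ℕ → ℕ) := fun x y h => by simpa using h
  have himg : (Finset.Icc 1 k).image (· + 1) = Finset.Icc 2 (k+1) := by
    ext x
    simp only [Finset.mem_image, Finset.mem_Icc]
    constructor
    · rintro ⟨a, ⟨ha1, ha2⟩, rfl⟩; omega
    · intro h; exact ⟨x - 1, by omega, by omega⟩
  have h1 : (1:ℕ) ∉ Finset.Icc 2 (k+1) := by simp
  have hins : Finset.Icc 1 (k+1) = insert 1 (Finset.Icc 2 (k+1)) := by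
    ext x; simp [Finset.mem_Icc]; omega
  rw [armPoly, armPoly, hins, Finset.prod_insert h1, Finset.sum_insert h1,
    Finset.erase_insert h1]
  have hsum : ∑ i ∈ Finset.Icc 2 (k+1), C (z i * (starRingEnd ℂ) (z i)) *
      ∏ m ∈ (insert 1 (Finset.Icc 2 (k+1))).erase i, (X - C (b m:ℂ))
      = (X - C ((b 1:ℂ))) * ∑ i ∈ Finset.Icc 1 k, C (z (i+1) * (starRingEnd ℂ) (z (i+1))) *
          ∏ m ∈ (Finset.Icc 1 k).erase i, (X - C ((b (m+1):ℂ))) := by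
    rw [Finset.mul_sum, ← himg, Finset.sum_image (fun x _ y _ h => hinj h)]
    refine Finset.sum_congr rfl fun i hi => ?_
    have hi' := Finset.mem_Icc.mp hi
    have hne : (1:ℕ) ≠ i + 1 := by omega
    rw [Finset.erase_insert_of_ne hne, Finset.prod_insert (by
        simp only [Finset.mem_erase]; exact fun h => h1 (himg ▸ h.2)),
      ← Finset.image_erase hinj, Finset.prod_image (fun x _ y _ h => hinj h)]
    ring
  rw [hsum, ← himg, Finset.prod_image (fun x _ y _ h => hinj h)]
  ring

theorem charpoly_Zarrow_s8 (k : ℕ) (b : ℕ → ℝ) (w : ℝ) (z : ℕ → ℂ) :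
    (Zarrow k b w z).charpoly = armPoly k b w z := by
  induction k generalizing b z with
  | zero =>
    rw [Matrix.charpoly, Matrix.det_fin_one, armPoly]
    simp [Zarrow, Matrix.charmatrix_apply_eq]
  | succ k ih =>
    have hsub : (Matrix.charmatrix (Zarrow (k+1) b w z)).submatrix Fin.succ Fin.succ
        = Matrix.charmatrix (Zarrow k (fun n => b (n+1)) w (fun n => z (n+1))) := by
      ext i m
      by_cases h : i = m <;>
        simp [Matrix.charmatrix_apply, Zarrow, Matrix.diagonal, h, Fin.val_succ,
          Nat.succ_lt_succ_iff, Fin.succ_inj]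
    have h00 : Matrix.charmatrix (Zarrow (k+1) b w z) 0 0 = X - C ((b 1 : ℂ)) := by
      rw [Matrix.charmatrix_apply_eq]
      simp [Zarrow]
    have h0last : Matrix.charmatrix (Zarrow (k+1) b w z) 0 (Fin.last (k+1)) = -C ((starRingEnd ℂ) (z 1)) := by
      rw [Matrix.charmatrix_apply_ne _ _ _ (by simp [Fin.ext_iff])]
      simp [Zarrow]
    have h0mid : ∀ jj : Fin (k+2), jj ≠ 0 → jj ≠ Fin.last (k+1) → Matrix.charmatrix (Zarrow (k+1) b w z) 0 jj = 0 := by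
      intro jj h1 h2
      rw [Matrix.charmatrix_apply_ne _ _ _ (Ne.symm h1)]
      have : (jj : ℕ) < k + 1 := by
        have := jj.isLt
        have h2' : (jj : ℕ) ≠ k + 1 := fun h => h2 (Fin.ext h)
        omega
      have h1' : jj ≠ (0 : Fin (k+2)) := h1
      simp [Zarrow, this, (Ne.symm h1' : (0 : Fin (k+2)) ≠ jj)]
      intro h; omega
    rw [Matrix.charpoly, Matrix.det_succ_row_zero]
    rw [← Finset.sum_subset (Finset.subset_univ ({0, Fin.last (k+1)} : Finset (Fin (k+2))))
      (fun x _ hx => by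
        simp only [Finset.mem_insert, Finset.mem_singleton, not_or] at hx
        rw [h0mid x hx.1 hx.2, mul_zero, zero_mul]),
      Finset.sum_pair (by simp [Fin.ext_iff])]
    rw [Fin.succAbove_zero, hsub, show ((Zarrow k (fun n => b (n+1)) w (fun n => z (n+1))).charmatrix).det = (Zarrow k (fun n => b (n+1)) w (fun n => z (n+1))).charpoly from rfl, ih]
    rw [h00, h0last]
    have hN : ((Zarrow (k + 1) b w z).charmatrix.submatrix Fin.succ (Fin.last (k + 1)).succAbove).det
        = (-1:Polynomial ℂ)^k * (-C (z 1)) * ∏ i : Fin k, (X - C ((b ((i:ℕ)+2) : ℝ) : ℂ)) := by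
      rw [Fin.succAbove_last, Matrix.det_succ_column_zero]
      have hcol : ∀ i : Fin (k+1), i ≠ Fin.last k →
          ((Zarrow (k + 1) b w z).charmatrix.submatrix Fin.succ Fin.castSucc) i 0 = 0 := by
        intro i hi
        have hi' : (i:ℕ) < k := by
          have h1 := i.isLt
          have h2 : (i:ℕ) ≠ k := fun h => hi (Fin.ext h)
          omega
        rw [Matrix.submatrix_apply, Fin.castSucc_zero,
          Matrix.charmatrix_apply_ne _ _ _ (Fin.succ_ne_zero i)]
        simp [Zarrow, Nat.succ_lt_succ_iff, hi', Fin.succ_ne_zero i]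
      rw [← Finset.sum_subset (Finset.subset_univ ({Fin.last k} : Finset (Fin (k+1))))
        (fun x _ hx => by
          rw [hcol x (by simpa using hx), mul_zero, zero_mul]),
        Finset.sum_singleton]
      have hentry : ((Zarrow (k + 1) b w z).charmatrix.submatrix Fin.succ Fin.castSucc)
          (Fin.last k) 0 = -C (z 1) := by
        rw [Matrix.submatrix_apply, Fin.castSucc_zero,
          Matrix.charmatrix_apply_ne _ _ _ (Fin.succ_ne_zero _)]
        simp [Zarrow, Fin.succ_last]
      have hP : (((Zarrow (k + 1) b w z).charmatrix.submatrix Fin.succ Fin.castSucc).submatrix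
            (Fin.last k).succAbove Fin.succ)
          = Matrix.diagonal (fun i : Fin k => X - C ((b ((i:ℕ)+2) : ℝ) : ℂ)) := by
        refine Matrix.ext fun i m => ?_
        have hik : (i:ℕ) < k := i.isLt
        have hmk : (m:ℕ) < k := m.isLt
        by_cases h : i = m
        · subst h
          simp [Matrix.charmatrix_apply, Zarrow, Matrix.diagonal, Fin.succAbove_last,
            Fin.ext_iff, Nat.succ_lt_succ_iff, hik]
        · have h' : (i:ℕ) ≠ (m:ℕ) := fun hh => h (Fin.ext hh)
          simp [Matrix.charmatrix_apply, Zarrow, Matrix.diagonal, Fin.succAbove_last,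
            Fin.ext_iff, Nat.succ_lt_succ_iff, hik, hmk, h']
      rw [hentry, hP, Matrix.det_diagonal, Fin.val_last]
    rw [hN, armPoly_succ]
    have hB2 : (∏ i : Fin k, (X - C ((b ((i:ℕ)+2) : ℝ) : ℂ)))
        = ∏ i ∈ Finset.Icc 2 (k+1), (X - C ((b i : ℝ) : ℂ)) := by
      rw [Fin.prod_univ_eq_prod_range (fun n => X - C ((b (n+2) : ℝ) : ℂ)) k]
      have himg2 : (Finset.range k).image (· + 2) = Finset.Icc 2 (k+1) := by
        ext x
        simp only [Finset.mem_image, Finset.mem_range, Finset.mem_Icc]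
        constructor
        · rintro ⟨a, ha, rfl⟩; omega
        · intro h; exact ⟨x - 2, by omega, by omega⟩
      rw [← himg2, Finset.prod_image (fun x _ y _ h => by simpa using h)]
    rw [hB2]
    have hsgn : ((-1:Polynomial ℂ))^(k+1) * (-1)^k = -1 := by
      rw [← pow_add]
      exact Odd.neg_one_pow ⟨k, by ring⟩
    rw [map_mul]
    simp only [Fin.val_last, Fin.val_zero, pow_zero, one_mul]
    linear_combination (C ((starRingEnd ℂ) (z 1)) * C (z 1) *
      ∏ i ∈ Finset.Icc 2 (k+1), (X - C ((b i : ℝ) : ℂ))) * hsgn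

theorem phi_inj (J l : ℕ) (hl : 1 ≤ l) :
    Function.Injective (fun m => if m ≤ J then m else m + l - 1) := by
  intro x y h
  simp only at h
  split_ifs at h <;> omega

theorem phi_image (J l K : ℕ) (hl : 1 ≤ l) (hK : J + l ≤ K + 1) :
    (Finset.Icc 1 (K + 1 - l)).image (fun m => if m ≤ J then m else m + l - 1)
      = Finset.Icc 1 K \ Finset.Icc (J+1) (J+l-1) := by
  ext x
  simp only [Finset.mem_image, Finset.mem_Icc, Finset.mem_sdiff]
  constructor
  · rintro ⟨m, ⟨h1, h2⟩, rfl⟩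
    split_ifs with h <;> omega
  · rintro ⟨⟨h1, h2⟩, h3⟩
    by_cases hx : x ≤ J
    · exact ⟨x, by omega, by simp [hx]⟩
    · refine ⟨x - l + 1, by omega, ?_⟩
      split_ifs with h <;> omega

/-- case (4).  Suppose `1 ≤ j`, `ℓ ≥ 1`, `j + ℓ ≤ k` and
`b_j > a_{j+1} = a_{j+2} = ⋯ = a_{j+ℓ} > b_{j+ℓ}` (1-based).  Let `a′` be obtained from `a`
by deleting `a_{j+2}, …, a_{j+ℓ}` and `b′` from `b` by deleting `b_{j+1}, …, b_{j+ℓ−1}`.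
Then `z ∈ Ã_{k+1}(a,b)` iff `z_{j+1} = ⋯ = z_{j+ℓ−1} = 0` and
`(z₁, …, z_j, z_{j+ℓ}, …, z_k) ∈ Ã_{k−ℓ+2}(a′, b′)`. -/
theorem statement8 (k : ℕ) (hk : 1 ≤ k) (a b : ℕ → ℝ)
    (hab : ∀ i, 1 ≤ i → i ≤ k → b i ≤ a i ∧ a (i + 1) ≤ b i)
    (j l : ℕ) (hj : 1 ≤ j) (hl : 1 ≤ l) (hjl : j + l ≤ k)
    (hlt1 : a (j + 1) < b j)
    (heq : ∀ m, j + 1 ≤ m → m ≤ j + l → a m = a (j + 1))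
    (hlt2 : b (j + l) < a (j + 1)) :
    ∀ z : ℕ → ℂ,
      z ∈ Atilde k a b ↔
        ((∀ m, j + 1 ≤ m → m < j + l → z m = 0) ∧
          (fun m => if m ≤ j then z m else z (m + l - 1)) ∈
            Atilde (k - l + 1) (fun m => if m ≤ j + 1 then a m else a (m + l - 1))
              (fun m => if m ≤ j then b m else b (m + l - 1))) := by
  intro z
  set c : ℝ := a (j + 1) with hc
  set w : ℝ := (∑ i ∈ Finset.Icc 1 (k + 1), a i) - ∑ i ∈ Finset.Icc 1 k, b i with hw
  set k' : ℕ := k - l + 1 with hk'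
  set b' : ℕ → ℝ := fun m => if m ≤ j then b m else b (m + l - 1) with hb'
  set a' : ℕ → ℝ := fun m => if m ≤ j + 1 then a m else a (m + l - 1) with ha'
  set z' : ℕ → ℂ := fun m => if m ≤ j then z m else z (m + l - 1) with hz'
  set M : Finset ℕ := Finset.Icc (j+1) (j+l-1) with hM
  set T : Finset ℕ := Finset.Icc 1 k \ M with hT
  set B₀ : Polynomial ℂ := ∏ i ∈ T, (X - C ((b i : ℝ) : ℂ)) with hB₀
  set S : ℂ := ∑ m ∈ M, z m * (starRingEnd ℂ) (z m) with hS
  set A' : Polynomial ℂ := ∏ i ∈ Finset.Icc 1 (k' + 1), (X - C ((a' i : ℝ) : ℂ)) with hA'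
  -- membership characterizations
  have hbmono : ∀ p q, 1 ≤ p → p ≤ q → q ≤ k → b q ≤ b p := by
    intro p q hp
    induction q with
    | zero => intro h1 _; exact (by omega : False).elim
    | succ q ih =>
      intro hpq hqk
      by_cases hpq1 : p = q + 1
      · subst hpq1; exact le_refl _
      · have h1 := (hab (q+1) (by omega) hqk).1
        have h2 := (hab q (by omega) (by omega)).2
        have h3 := ih (by omega) (by omega)
        linarith
  have hbc : ∀ m, j + 1 ≤ m → m ≤ j + l - 1 → b m = c := by
    intro m h1 h2
    have e1 : a m = c := heq m h1 (by omega)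
    have e2 : a (m+1) = c := heq (m+1) (by omega) (by omega)
    have g1 := (hab m (by omega) (by omega)).1
    have g2 := (hab m (by omega) (by omega)).2
    rw [e1] at g1; rw [e2] at g2
    linarith
  have hbne : ∀ i, 1 ≤ i → i ≤ k → (i ≤ j ∨ j + l ≤ i) → b i ≠ c := by
    intro i h1 h2 h3
    rcases h3 with h | h
    · have := hbmono i j h1 h (by omega)
      intro hx; rw [hx] at this; linarith
    · have := hbmono (j+l) i (by omega) h h2
      intro hx; rw [hx] at this; linarith
  have hane : ∀ i, 1 ≤ i → i ≤ k + 1 → (i ≤ j ∨ j + l + 1 ≤ i) → a i ≠ c := by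
    intro i h1 h2 h3
    rcases h3 with h | h
    · have g1 := (hab i h1 (by omega)).1
      have g2 := hbmono i j h1 h (by omega)
      intro hx; rw [hx] at g1; linarith
    · have g1 := (hab (i-1) (by omega) (by omega)).2
      have he : i - 1 + 1 = i := by omega
      rw [he] at g1
      have g2 := hbmono (j+l) (i-1) (by omega) (by omega) (by omega)
      intro hx; rw [hx] at g1; linarith
  have hMsub : M ⊆ Finset.Icc 1 k := Finset.Icc_subset_Icc (by omega) (by omega)
  have hcardM : M.card = l - 1 := by rw [hM, Nat.card_Icc]; omega
  have hprodM : ∏ m ∈ M, (X - C ((b m : ℝ) : ℂ)) = (X - C ((c : ℝ) : ℂ))^(l-1) := by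
    rw [Finset.prod_congr rfl (fun m hm => by
      have hm' := Finset.mem_Icc.mp hm
      rw [hbc m hm'.1 hm'.2]), Finset.prod_const, hcardM]
  have hinj : ∀ J : ℕ, Function.Injective (fun m => if m ≤ J then m else m + l - 1) :=
    fun J => phi_inj J l hl
  have hcast : ∀ (u v : ℝ), u ≠ v → ((u : ℂ) ≠ (v : ℂ)) := by
    intro u v h hx; exact h (by exact_mod_cast hx)
  have hmem : z ∈ Atilde k a b ↔
      armPoly k b w z = ∏ i ∈ Finset.Icc 1 (k + 1), (X - C ((a i : ℝ) : ℂ)) := by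
    rw [Atilde, Set.mem_setOf_eq, Zab, charpoly_Zarrow_s8]
  have haimg : (Finset.Icc 1 ((k+1) + 1 - l)).image (fun m => if m ≤ j + 1 then m else m + l - 1)
      = Finset.Icc 1 (k+1) \ Finset.Icc (j+2) (j+l) := by
    have := phi_image (j+1) l (k+1) hl (by omega)
    have h1 : j + 1 + 1 = j + 2 := by omega
    have h2 : j + 1 + l - 1 = j + l := by omega
    rw [h1, h2] at this
    exact this
  have hbimg : (Finset.Icc 1 (k + 1 - l)).image (fun m => if m ≤ j then m else m + l - 1)
      = T := phi_image j l k hl (by omega)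
  have hk'1 : k' + 1 = (k + 1) + 1 - l := by omega
  have hk'2 : k' = k + 1 - l := by omega
  have hDsub : Finset.Icc (j+2) (j+l) ⊆ Finset.Icc 1 (k+1) :=
    Finset.Icc_subset_Icc (by omega) (by omega)
  have hcardD : (Finset.Icc (j+2) (j+l)).card = l - 1 := by rw [Nat.card_Icc]; omega
  have hww' : (∑ i ∈ Finset.Icc 1 (k' + 1), a' i) - ∑ i ∈ Finset.Icc 1 k', b' i = w := by
    have hsa : ∑ i ∈ Finset.Icc 1 (k' + 1), a' i
        = (∑ i ∈ Finset.Icc 1 (k+1), a i) - ((l-1 : ℕ) : ℝ) * c := by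
      have e1 : ∑ i ∈ Finset.Icc 1 (k' + 1), a' i
          = ∑ i ∈ Finset.Icc 1 (k+1) \ Finset.Icc (j+2) (j+l), a i := by
        rw [hk'1, ← haimg, Finset.sum_image (fun x _ y _ h => hinj (j+1) h)]
        exact Finset.sum_congr rfl (fun m _ => by
          by_cases h : m ≤ j + 1 <;> simp [ha', h])
      have e2 : ∑ i ∈ Finset.Icc (j+2) (j+l), a i = ((l-1 : ℕ) : ℝ) * c := by
        rw [Finset.sum_congr rfl (fun m hm => by
          have hm' := Finset.mem_Icc.mp hm
          exact heq m (by omega) (by omega)), Finset.sum_const, hcardD, nsmul_eq_mul]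
      rw [e1, Finset.sum_sdiff_eq_sub hDsub, e2]
    have hsb : ∑ i ∈ Finset.Icc 1 k', b' i
        = (∑ i ∈ Finset.Icc 1 k, b i) - ((l-1 : ℕ) : ℝ) * c := by
      have e1 : ∑ i ∈ Finset.Icc 1 k', b' i = ∑ i ∈ T, b i := by
        rw [hk'2, ← hbimg, Finset.sum_image (fun x _ y _ h => hinj j h)]
        exact Finset.sum_congr rfl (fun m _ => by
          by_cases h : m ≤ j <;> simp [hb', h])
      have e2 : ∑ i ∈ M, b i = ((l-1 : ℕ) : ℝ) * c := by
        rw [Finset.sum_congr rfl (fun m hm => by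
          have hm' := Finset.mem_Icc.mp hm
          exact hbc m hm'.1 hm'.2), Finset.sum_const, hcardM, nsmul_eq_mul]
      rw [e1, hT, Finset.sum_sdiff_eq_sub hMsub, e2]
    rw [hsa, hsb, hw]
    ring
  have hmem' : z' ∈ Atilde k' a' b' ↔ armPoly k' b' w z' = A' := by
    rw [Atilde, Set.mem_setOf_eq, Zab, charpoly_Zarrow_s8, hww']
  -- factorizations
  have hAfact : (∏ i ∈ Finset.Icc 1 (k + 1), (X - C ((a i : ℝ) : ℂ)))
      = (X - C ((c : ℝ) : ℂ))^(l-1) * A' := by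
    have e1 : A' = ∏ i ∈ Finset.Icc 1 (k+1) \ Finset.Icc (j+2) (j+l), (X - C ((a i : ℝ) : ℂ)) := by
      rw [hA', hk'1, ← haimg, Finset.prod_image (fun x _ y _ h => hinj (j+1) h)]
      exact Finset.prod_congr rfl (fun m _ => by
        by_cases h : m ≤ j + 1 <;> simp [ha', h])
    have e2 : ∏ i ∈ Finset.Icc (j+2) (j+l), (X - C ((a i : ℝ) : ℂ))
        = (X - C ((c : ℝ) : ℂ))^(l-1) := by
      rw [Finset.prod_congr rfl (fun m hm => by
        have hm' := Finset.mem_Icc.mp hm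
        rw [heq m (by omega) (by omega)]), Finset.prod_const, hcardD]
    rw [e1, ← Finset.prod_sdiff hDsub, e2, mul_comm]
  have hIdent : armPoly k b w z
      = (X - C ((c : ℝ) : ℂ))^(l-1) * armPoly k' b' w z'
        - C S * ((X - C ((c : ℝ) : ℂ))^(l-2) * B₀) := by
    -- step 1: full b-product factors
    have step1 : ∏ i ∈ Finset.Icc 1 k, (X - C ((b i : ℝ) : ℂ))
        = (X - C ((c : ℝ) : ℂ))^(l-1) * B₀ := by
      rw [← Finset.prod_sdiff hMsub, hprodM, mul_comm]
    -- step 3: erase-products for i outside M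
    have step3 : ∀ i ∈ T, ∏ m ∈ (Finset.Icc 1 k).erase i, (X - C ((b m : ℝ) : ℂ))
        = (X - C ((c : ℝ) : ℂ))^(l-1) * ∏ m ∈ T.erase i, (X - C ((b m : ℝ) : ℂ)) := by
      intro i hi
      have hiM : i ∉ M := (Finset.mem_sdiff.mp hi).2
      have hsubM : M ⊆ (Finset.Icc 1 k).erase i := fun m hm =>
        Finset.mem_erase.mpr ⟨fun h => hiM (h ▸ hm), hMsub hm⟩
      rw [← Finset.prod_sdiff hsubM, hprodM, ← Finset.erase_sdiff_comm, mul_comm]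
    -- step 4: erase-products for m inside M
    have step4 : ∀ m ∈ M, ∏ i ∈ (Finset.Icc 1 k).erase m, (X - C ((b i : ℝ) : ℂ))
        = (X - C ((c : ℝ) : ℂ))^(l-2) * B₀ := by
      intro m hm
      have hm' := Finset.mem_Icc.mp hm
      have hsub2 : M.erase m ⊆ (Finset.Icc 1 k).erase m := Finset.erase_subset_erase _ hMsub
      have hset : (Finset.Icc 1 k).erase m \ M.erase m = T := by
        ext x
        simp only [hT, hM, Finset.mem_sdiff, Finset.mem_erase, Finset.mem_Icc]
        omega
      have hprodMe : ∏ i ∈ M.erase m, (X - C ((b i : ℝ) : ℂ))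
          = (X - C ((c : ℝ) : ℂ))^(l-2) := by
        rw [Finset.prod_congr rfl (fun i hi => by
          have hi' := Finset.mem_Icc.mp (Finset.mem_of_mem_erase hi)
          rw [hbc i hi'.1 hi'.2]), Finset.prod_const,
          Finset.card_erase_of_mem hm, hcardM]
        congr 1
      rw [← Finset.prod_sdiff hsub2, hprodMe, hset, mul_comm]
    -- step 5: the M part of the sum
    have step5 : ∑ m ∈ M, C (z m * (starRingEnd ℂ) (z m)) *
        ∏ i ∈ (Finset.Icc 1 k).erase m, (X - C ((b i : ℝ) : ℂ))
        = C S * ((X - C ((c : ℝ) : ℂ))^(l-2) * B₀) := by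
      rw [Finset.sum_congr rfl (fun m hm => by rw [step4 m hm]), ← Finset.sum_mul, hS, map_sum]
    -- step 6: the reduced armPoly in terms of T
    have step6 : armPoly k' b' w z' = (X - C ((w : ℝ) : ℂ)) * B₀
        - ∑ i ∈ T, C (z i * (starRingEnd ℂ) (z i)) *
            ∏ m ∈ T.erase i, (X - C ((b m : ℝ) : ℂ)) := by
      rw [armPoly]
      have e1 : ∏ i ∈ Finset.Icc 1 k', (X - C ((b' i : ℝ) : ℂ)) = B₀ := by
        rw [hk'2, hB₀, ← hbimg, Finset.prod_image (fun x _ y _ h => hinj j h)]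
        exact Finset.prod_congr rfl (fun m _ => by
          by_cases h : m ≤ j <;> simp [hb', h])
      have e2 : ∑ i ∈ Finset.Icc 1 k', C (z' i * (starRingEnd ℂ) (z' i)) *
          ∏ m ∈ (Finset.Icc 1 k').erase i, (X - C ((b' m : ℝ) : ℂ))
          = ∑ i ∈ T, C (z i * (starRingEnd ℂ) (z i)) *
              ∏ m ∈ T.erase i, (X - C ((b m : ℝ) : ℂ)) := by
        rw [hk'2, ← hbimg, Finset.sum_image (fun x _ y _ h => hinj j h)]
        refine Finset.sum_congr rfl (fun i _ => ?_)
        have ez : z' i = z (if i ≤ j then i else i + l - 1) := by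
          by_cases h : i ≤ j <;> simp [hz', h]
        have ep : ∏ m ∈ (Finset.Icc 1 (k + 1 - l)).erase i, (X - C ((b' m : ℝ) : ℂ))
            = ∏ m ∈ T.erase ((fun m => if m ≤ j then m else m + l - 1) i),
                (X - C ((b m : ℝ) : ℂ)) := by
          rw [← hbimg, ← Finset.image_erase (hinj j),
            Finset.prod_image (fun x _ y _ h => hinj j h)]
          exact Finset.prod_congr rfl (fun m _ => by
            by_cases h : m ≤ j <;> simp [hb', h])
        rw [ez, ep, hbimg]
      rw [e1, e2]
    -- assemble
    have hsumT : ∑ i ∈ T, C (z i * (starRingEnd ℂ) (z i)) *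
        ((X - C ((c : ℝ) : ℂ))^(l-1) * ∏ m ∈ T.erase i, (X - C ((b m : ℝ) : ℂ)))
        = (X - C ((c : ℝ) : ℂ))^(l-1) * ∑ i ∈ T, C (z i * (starRingEnd ℂ) (z i)) *
            ∏ m ∈ T.erase i, (X - C ((b m : ℝ) : ℂ)) := by
      rw [Finset.mul_sum]
      exact Finset.sum_congr rfl fun i _ => by ring
    rw [armPoly, step1, ← Finset.sum_sdiff hMsub, ← hT,
      Finset.sum_congr rfl (fun i hi => by rw [step3 i hi]), hsumT, step5, step6]
    ring
  have hpow_ne : ∀ n : ℕ, (X - C ((c : ℝ) : ℂ))^n ≠ 0 :=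
    fun n => pow_ne_zero n (X_sub_C_ne_zero _)
  have hB₀c : Polynomial.eval ((c : ℝ) : ℂ) B₀ ≠ 0 := by
    rw [hB₀, Polynomial.eval_prod]
    rw [Finset.prod_ne_zero_iff]
    intro i hi
    have hi' : (1 ≤ i ∧ i ≤ k) ∧ ¬(j + 1 ≤ i ∧ i ≤ j + l - 1) := by
      have := Finset.mem_sdiff.mp hi
      exact ⟨Finset.mem_Icc.mp this.1, fun h => this.2 (Finset.mem_Icc.mpr h)⟩
    simp only [eval_sub, eval_X, eval_C]
    exact fun h => (hcast _ _ (hbne i hi'.1.1 hi'.1.2 (by omega))).symm (by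
      rwa [sub_eq_zero] at h)
  have hSzero : (∀ m, j + 1 ≤ m → m < j + l → z m = 0) ↔ S = 0 := by
    constructor
    · intro h
      rw [hS]
      apply Finset.sum_eq_zero
      intro m hm
      have hm' := Finset.mem_Icc.mp hm
      rw [h m hm'.1 (by omega)]
      simp
    · intro h0 m h1 h2
      have hr : ((∑ m ∈ M, Complex.normSq (z m) : ℝ) : ℂ) = S := by
        rw [hS]
        push_cast
        exact Finset.sum_congr rfl fun m _ => by rw [Complex.mul_conj]
      have hr0 : ∑ m ∈ M, Complex.normSq (z m) = 0 := by
        have := hr.trans h0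
        exact_mod_cast this
      have := (Finset.sum_eq_zero_iff_of_nonneg
        (fun m _ => Complex.normSq_nonneg (z m))).mp hr0 m
        (Finset.mem_Icc.mpr ⟨h1, by omega⟩)
      exact Complex.normSq_eq_zero.mp this
  constructor
  · intro hz
    rw [hmem] at hz
    have hS0 : S = 0 := by
      rcases Nat.lt_or_ge l 2 with hl2 | hl2
      · have : M = ∅ := by
          rw [hM]; apply Finset.Icc_eq_empty; omega
        rw [hS, this, Finset.sum_empty]
      · -- cancellation and evaluation
        have hl1 : l - 1 = (l - 2) + 1 := by omega
        have hcancel : (X - C ((c : ℝ) : ℂ)) * armPoly k' b' w z' - C S * B₀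
            = (X - C ((c : ℝ) : ℂ)) * A' := by
          have h2 : (X - C ((c : ℝ) : ℂ))^(l-2) *
              ((X - C ((c : ℝ) : ℂ)) * armPoly k' b' w z' - C S * B₀)
              = (X - C ((c : ℝ) : ℂ))^(l-2) * ((X - C ((c : ℝ) : ℂ)) * A') := by
            calc (X - C ((c : ℝ) : ℂ))^(l-2) *
                ((X - C ((c : ℝ) : ℂ)) * armPoly k' b' w z' - C S * B₀)
                = (X - C ((c : ℝ) : ℂ))^(l-1) * armPoly k' b' w z'
                  - C S * ((X - C ((c : ℝ) : ℂ))^(l-2) * B₀) := by rw [hl1]; ring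
              _ = armPoly k b w z := hIdent.symm
              _ = ∏ i ∈ Finset.Icc 1 (k + 1), (X - C ((a i : ℝ) : ℂ)) := hz
              _ = (X - C ((c : ℝ) : ℂ))^(l-1) * A' := hAfact
              _ = (X - C ((c : ℝ) : ℂ))^(l-2) * ((X - C ((c : ℝ) : ℂ)) * A') := by
                  rw [hl1]; ring
          exact mul_left_cancel₀ (hpow_ne _) h2
        have := congrArg (Polynomial.eval ((c : ℝ) : ℂ)) hcancel
        simp only [eval_sub, eval_mul, eval_X, eval_C, sub_self, zero_mul, zero_sub,
          neg_eq_zero, mul_eq_zero] at this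
        rcases this with h | h
        · exact h
        · exact absurd h hB₀c
    have harm : armPoly k' b' w z' = A' := by
      have h3 : armPoly k b w z = (X - C ((c : ℝ) : ℂ))^(l-1) * armPoly k' b' w z' := by
        rw [hIdent, hS0, map_zero, zero_mul, sub_zero]
      apply mul_left_cancel₀ (hpow_ne (l-1))
      rw [← h3, hz, hAfact]
    exact ⟨hSzero.mpr hS0, hmem'.mpr harm⟩
  · rintro ⟨hz0, hz⟩
    rw [hmem'] at hz
    rw [hmem, hIdent, hSzero.mp hz0, map_zero, zero_mul, sub_zero, hz, hAfact]
end
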